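/- arXiv:2112.09655 — 5 statements merged into one kernel-verified Lean document; each statement's English description precedes it below -/
import Mathlib

section
/- With probability at least 1−δ, ∫ |V(s) − V̄(φ(s))| dξ(s) ≤ γ L̂_P/(1−γ) + γε/(1+γK), where L̂_P = (1/T) Σ_{t<T} (1 − P̄(φ(S_t))(φ(S'_t))) is the empirical transition loss, provided K ≥ 0, ε, δ ∈ (0,1), and T ≥ ⌈−log(δ/4)·(1+γK)²/(2ε²(1−γ)²)⌉. -/
open MeasureTheory ProbabilityTheory

/-- Total variation distance between two measures on `X`:
the supremum over measurable sets of the absolute difference of their masses. -/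
noncomputable def tvDist {X : Type*} [MeasurableSpace X] (μ ν : Measure X) : ℝ :=
  ⨆ A : {A : Set X // MeasurableSet A}, |(μ A.1).toReal - (ν A.1).toReal|

/-!
The embedding error `W s = |V s - V̄ (φ s)|` satisfies a discounted one-step inequality: away from
the targets, the Bellman equations give `W s ≤ γ ∫ (W s' + ℓ(s, s')) dP(s'|s)`, where
`ℓ(s, s') = 1 - P̄(φ s)(φ s')` bounds the error made by replacing the ground successor `φ s'` with
the latent transition. Integrating against the invariant measure `ξ` gives
`(1 - γ) ∫ W dξ ≤ γ L`, with `L` the expectation of `ℓ` under `ξ ⊗ P`. Finally `ℓ ∈ [0, 1]`, so by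
Hoeffding's inequality the empirical mean of `ℓ` over `T` i.i.d. samples is at least `L - c` with
probability `1 - exp (-2 T c²)`; the sample size makes this at least `1 - δ` for
`c = ε (1 - γ) / (1 + γ K)`.
-/

theorem measureReal_sum_le_card_mul_sub_le_exp {Ω ι : Type*} [MeasurableSpace Ω]
    {μ : Measure Ω} [IsProbabilityMeasure μ] [Fintype ι] {Y : ι → Ω → ℝ}
    (hindep : iIndepFun Y μ) (hmeas : ∀ i, AEMeasurable (Y i) μ)
    (hY : ∀ i ω, Y i ω ∈ Set.Icc 0 1) {m : ℝ} (hm : ∀ i, μ[Y i] = m) {c : ℝ} (hc : 0 ≤ c) :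
    μ.real {ω | ∑ i, Y i ω ≤ Fintype.card ι * (m - c)} ≤
      Real.exp (-2 * Fintype.card ι * c ^ 2) := by
  have hsubG : ∀ i ∈ Finset.univ,
      HasSubgaussianMGF (fun ω ↦ m - Y i ω) ((‖(1 : ℝ) - 0‖₊ / 2) ^ 2) μ := fun i _ ↦ by
    convert (hasSubgaussianMGF_of_mem_Icc (hmeas i) (ae_of_all _ (hY i))).neg using 1
    ext ω
    simp [hm i]
  have hindep' : iIndepFun (fun i ω ↦ m - Y i ω) μ :=
    hindep.comp (fun _ y ↦ m - y) (fun _ ↦ measurable_const.sub measurable_id)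
  have hoeffding := HasSubgaussianMGF.measure_sum_ge_le_of_iIndepFun hindep' hsubG
    (mul_nonneg (Nat.cast_nonneg (Fintype.card ι)) hc)
  refine (measureReal_mono fun ω hω ↦ ?_).trans (hoeffding.trans_eq ?_)
  · simp only [Set.mem_ofPred_eq, Finset.sum_sub_distrib, Finset.sum_const, Finset.card_univ,
      nsmul_eq_mul] at hω ⊢
    linarith
  · rcases (Fintype.card ι).eq_zero_or_pos with h | h
    · simp [h]
    · simp only [sub_zero, nnnorm_one, one_div, inv_pow, Finset.sum_const, Finset.card_univ,
        nsmul_eq_mul, NNReal.coe_mul, NNReal.coe_natCast, NNReal.coe_inv, NNReal.coe_pow,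
        NNReal.coe_ofNat, neg_mul]
      field_simp

theorem one_sub_exp_le_measureReal_integral_sub_lt_mean {Ω α : Type*} [MeasurableSpace Ω]
    [MeasurableSpace α] {μ : Measure Ω} [IsProbabilityMeasure μ] {ν : Measure α}
    {T : ℕ} {Z : Fin T → Ω → α} (hZmeas : ∀ t, Measurable (Z t))
    (hZindep : iIndepFun Z μ) (hZlaw : ∀ t, μ.map (Z t) = ν)
    {ℓ : α → ℝ} (hℓ : Measurable ℓ) (hℓ01 : ∀ x, ℓ x ∈ Set.Icc 0 1) {c : ℝ} (hc : 0 ≤ c) :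
    1 - Real.exp (-2 * T * c ^ 2) ≤
      μ.real {ω | ∫ x, ℓ x ∂ν - c < 1 / (T : ℝ) * ∑ t, ℓ (Z t ω)} := by
  rcases T.eq_zero_or_pos with rfl | hT
  · simp
  have hmean : ∀ t, μ[fun ω ↦ ℓ (Z t ω)] = ∫ x, ℓ x ∂ν := fun t ↦ by
    rw [← hZlaw t, integral_map (hZmeas t).aemeasurable hℓ.aestronglyMeasurable]
  have htail := measureReal_sum_le_card_mul_sub_le_exp (Y := fun t ω ↦ ℓ (Z t ω))
    (hZindep.comp (fun _ ↦ ℓ) fun _ ↦ hℓ)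
    (fun t ↦ (hℓ.comp (hZmeas t)).aemeasurable) (fun _ _ ↦ hℓ01 _) hmean hc
  rw [Fintype.card_fin] at htail
  have hcover : Set.univ ⊆ {ω | ∑ t, ℓ (Z t ω) ≤ T * (∫ x, ℓ x ∂ν - c)} ∪
      {ω | ∫ x, ℓ x ∂ν - c < 1 / (T : ℝ) * ∑ t, ℓ (Z t ω)} := fun ω _ ↦ by
    rcases le_or_gt (∑ t, ℓ (Z t ω)) (T * (∫ x, ℓ x ∂ν - c)) with h | h
    · exact Or.inl h
    · right
      rwa [Set.mem_ofPred_eq, one_div_mul_eq_div, lt_div_iff₀' (by positivity)]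
  have := (measureReal_mono hcover (measure_ne_top μ _)).trans (measureReal_union_le _ _)
  rw [probReal_univ] at this
  linarith

theorem exp_neg_two_mul_sq_le_of_neg_log_div_le {δ c T : ℝ} (hδ : 0 < δ) (hc : 0 < c)
    (hT : -Real.log (δ / 4) / (2 * c ^ 2) ≤ T) : Real.exp (-2 * T * c ^ 2) ≤ δ / 4 := by
  rw [div_le_iff₀ (by positivity)] at hT
  calc Real.exp (-2 * T * c ^ 2) ≤ Real.exp (Real.log (δ / 4)) := Real.exp_le_exp.2 (by linarith)
    _ = δ / 4 := Real.exp_log (by positivity)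

theorem abs_sub_sum_mul_le_one_sub {ι : Type*} [Fintype ι] [DecidableEq ι] {w f : ι → ℝ}
    (hw0 : ∀ i, 0 ≤ w i) (hw1 : ∑ i, w i = 1) (hf : ∀ i, f i ∈ Set.Icc 0 1) (j : ι) :
    |f j - ∑ i, w i * f i| ≤ 1 - w j := by
  set R := ∑ i ∈ Finset.univ.erase j, w i * f i
  have hsplit : ∑ i, w i * f i = w j * f j + R :=
    (Finset.add_sum_erase _ _ (Finset.mem_univ j)).symm
  have hrest : ∑ i ∈ Finset.univ.erase j, w i = 1 - w j := by
    rw [← hw1, ← Finset.add_sum_erase _ _ (Finset.mem_univ j), add_sub_cancel_left]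
  have hR0 : 0 ≤ R := Finset.sum_nonneg fun i _ ↦ mul_nonneg (hw0 i) (hf i).1
  have hR1 : R ≤ 1 - w j := hrest ▸ Finset.sum_le_sum fun i _ ↦
    mul_le_of_le_one_right (hw0 i) (hf i).2
  obtain ⟨hfj0, hfj1⟩ := hf j
  rw [hsplit, abs_le]
  constructor <;> nlinarith

namespace PMF

theorem toReal_le_one {α : Type*} (p : PMF α) (a : α) : (p a).toReal ≤ 1 :=
  ENNReal.toReal_le_of_le_ofReal zero_le_one (by simpa using p.coe_le_one a)

theorem sum_toReal {α : Type*} [Fintype α] (p : PMF α) : ∑ a, (p a).toReal = 1 := by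
  have h := p.tsum_coe
  rw [tsum_fintype] at h
  rw [← ENNReal.toReal_sum fun a _ ↦ p.apply_ne_top a, h, ENNReal.toReal_one]

end PMF

namespace ProbabilityTheory.Kernel

variable {S : Type*} [MeasurableSpace S] {P : Kernel S S} {ξ : Measure S}

theorem invariant_of_forall_lintegral (hinv : ∀ A, MeasurableSet A → ξ A = ∫⁻ s, P s A ∂ξ) :
    P.Invariant ξ :=
  Measure.ext fun A hA ↦ by rw [Measure.bind_apply hA P.aemeasurable, hinv A hA]

theorem Invariant.map_snd_compProd [IsSFiniteKernel P] [SFinite ξ] (hP : P.Invariant ξ) :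
    (ξ ⊗ₘ P).map Prod.snd = ξ := by
  rw [← Measure.snd, Measure.snd_compProd]
  exact hP

theorem Invariant.integral_le_div_of_le_integral [IsMarkovKernel P] [IsProbabilityMeasure ξ]
    (hP : P.Invariant ξ) {γ : ℝ} (hγ : γ < 1) {W : S → ℝ} {ℓ : S × S → ℝ}
    (hW : Integrable W ξ) (hℓ : Integrable ℓ (ξ ⊗ₘ P))
    (h : ∀ s, W s ≤ γ * ∫ s', (W s' + ℓ (s, s')) ∂(P s)) :
    ∫ s, W s ∂ξ ≤ γ * (∫ z, ℓ z ∂(ξ ⊗ₘ P)) / (1 - γ) := by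
  have hsnd := hP.map_snd_compProd
  have hWmap : Integrable W ((ξ ⊗ₘ P).map Prod.snd) := by rwa [hsnd]
  have hWsnd : Integrable (fun z ↦ W z.2) (ξ ⊗ₘ P) :=
    (integrable_map_measure hWmap.1 measurable_snd.aemeasurable).1 hWmap
  have hsum : Integrable (fun z ↦ W z.2 + ℓ z) (ξ ⊗ₘ P) := hWsnd.add hℓ
  have hWsnd_eq : ∫ z, W z.2 ∂(ξ ⊗ₘ P) = ∫ s, W s ∂ξ := by
    rw [← integral_map measurable_snd.aemeasurable hWmap.1, hsnd]
  have key : ∫ s, W s ∂ξ ≤ γ * (∫ s, W s ∂ξ + ∫ z, ℓ z ∂(ξ ⊗ₘ P)) :=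
    calc ∫ s, W s ∂ξ ≤ ∫ s, γ * ∫ s', (W s' + ℓ (s, s')) ∂(P s) ∂ξ :=
          integral_mono hW (hsum.integral_compProd.const_mul γ) h
      _ = γ * (∫ s, W s ∂ξ + ∫ z, ℓ z ∂(ξ ⊗ₘ P)) := by
          rw [integral_const_mul, ← Measure.integral_compProd hsum, integral_add hWsnd hℓ,
            hWsnd_eq]
  rw [le_div_iff₀ (sub_pos.2 hγ)]
  linarith

end ProbabilityTheory.Kernel

section Reachability

variable {S Sb : Type*}

/-- The summand of the paper's empirical transition loss `L̂_P`. -/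
noncomputable def latentTransitionLoss (Pb : Sb → PMF Sb) (φ : S → Sb) (z : S × S) : ℝ :=
  1 - (Pb (φ z.1) (φ z.2)).toReal

theorem latentTransitionLoss_mem_Icc (Pb : Sb → PMF Sb) (φ : S → Sb) (z : S × S) :
    latentTransitionLoss Pb φ z ∈ Set.Icc 0 1 :=
  ⟨sub_nonneg.2 (PMF.toReal_le_one _ _), sub_le_self _ ENNReal.toReal_nonneg⟩

variable [MeasurableSpace S] [Fintype Sb] [MeasurableSpace Sb] [DiscreteMeasurableSpace Sb]
  {φ : S → Sb}

theorem measurable_latentTransitionLoss (Pb : Sb → PMF Sb) (hφ : Measurable φ) :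
    Measurable (latentTransitionLoss Pb φ) :=
  (measurable_of_countable fun q : Sb × Sb ↦ 1 - (Pb q.1 q.2).toReal).comp (hφ.prodMap hφ)

theorem abs_integral_sub_sum_le_integral (hφ : Measurable φ) {ν : Measure S}
    [IsProbabilityMeasure ν] {V : S → ℝ} (hV : Integrable V ν) (p : PMF Sb) {Vb : Sb → ℝ}
    (hVb : ∀ x, Vb x ∈ Set.Icc 0 1) :
    |∫ s, V s ∂ν - ∑ y, (p y).toReal * Vb y| ≤
      ∫ s, (|V s - Vb (φ s)| + (1 - (p (φ s)).toReal)) ∂ν := by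
  classical
  set m := ∑ y, (p y).toReal * Vb y
  have hVbφ : Integrable (fun s ↦ Vb (φ s)) ν :=
    .of_mem_Icc 0 1 (Measurable.of_discrete.comp hφ).aemeasurable (ae_of_all _ (hVb <| φ ·))
  have hpφ : Integrable (fun s ↦ 1 - (p (φ s)).toReal) ν :=
    .of_mem_Icc 0 1
      ((Measurable.of_discrete (f := fun y ↦ 1 - (p y).toReal)).comp hφ).aemeasurable
      (ae_of_all _ fun s ↦ ⟨sub_nonneg.2 (p.toReal_le_one _), sub_le_self _ ENNReal.toReal_nonneg⟩)
  calc |∫ s, V s ∂ν - m| = |∫ s, (V s - m) ∂ν| := by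
        rw [integral_sub hV (integrable_const m), integral_const, probReal_univ, one_smul]
    _ ≤ ∫ s, |V s - m| ∂ν := abs_integral_le_integral_abs
    _ ≤ ∫ s, (|V s - Vb (φ s)| + (1 - (p (φ s)).toReal)) ∂ν := by
        refine integral_mono (hV.sub (integrable_const m)).abs ((hV.sub hVbφ).abs.add hpφ)
          fun s ↦ (abs_sub_le _ (Vb (φ s)) _).trans (add_le_add_right ?_ _)
        exact abs_sub_sum_mul_le_one_sub (fun _ ↦ ENNReal.toReal_nonneg) p.sum_toReal hVb _

variable {P : Kernel S S} [IsMarkovKernel P] {Pb : Sb → PMF Sb} {γ : ℝ} {Bb : Set Sb}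
  {V : S → ℝ} {Vb : Sb → ℝ}

theorem abs_sub_le_discounted_integral (hφ : Measurable φ) (hγ : 0 ≤ γ)
    (hV : ∀ s, Integrable V (P s)) (hVtarget : ∀ s, φ s ∈ Bb → V s = 1)
    (hVbellman : ∀ s, φ s ∉ Bb → V s = γ * ∫ s', V s' ∂(P s))
    (hVb : ∀ x, Vb x ∈ Set.Icc 0 1) (hVbtarget : ∀ x ∈ Bb, Vb x = 1)
    (hVbbellman : ∀ x, x ∉ Bb → Vb x = γ * ∑ y, ((Pb x) y).toReal * Vb y) (s : S) :
    |V s - Vb (φ s)| ≤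
      γ * ∫ s', (|V s' - Vb (φ s')| + latentTransitionLoss Pb φ (s, s')) ∂(P s) := by
  by_cases hs : φ s ∈ Bb
  · rw [hVtarget s hs, hVbtarget _ hs, sub_self, abs_zero]
    exact mul_nonneg hγ <| integral_nonneg fun s' ↦
      add_nonneg (abs_nonneg _) (latentTransitionLoss_mem_Icc Pb φ _).1
  · rw [hVbellman s hs, hVbbellman _ hs, ← mul_sub, abs_mul, abs_of_nonneg hγ]
    exact mul_le_mul_of_nonneg_left (abs_integral_sub_sum_le_integral hφ (hV s) _ hVb) hγ

theorem integral_abs_sub_le_of_bellman {ξ : Measure S} [IsProbabilityMeasure ξ]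
    (hP : P.Invariant ξ) (hφ : Measurable φ) (hγ0 : 0 ≤ γ) (hγ1 : γ < 1)
    (hVmeas : Measurable V) (hV : ∀ s, V s ∈ Set.Icc 0 1) (hVtarget : ∀ s, φ s ∈ Bb → V s = 1)
    (hVbellman : ∀ s, φ s ∉ Bb → V s = γ * ∫ s', V s' ∂(P s))
    (hVb : ∀ x, Vb x ∈ Set.Icc 0 1) (hVbtarget : ∀ x ∈ Bb, Vb x = 1)
    (hVbbellman : ∀ x, x ∉ Bb → Vb x = γ * ∑ y, ((Pb x) y).toReal * Vb y) :
    ∫ s, |V s - Vb (φ s)| ∂ξ ≤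
      γ * (∫ z, latentTransitionLoss Pb φ z ∂(ξ ⊗ₘ P)) / (1 - γ) := by
  have hVint : ∀ (ν : Measure S) [IsProbabilityMeasure ν], Integrable V ν := fun ν _ ↦
    .of_mem_Icc 0 1 hVmeas.aemeasurable (ae_of_all _ hV)
  have hVbφ : Integrable (fun s ↦ Vb (φ s)) ξ :=
    .of_mem_Icc 0 1 (Measurable.of_discrete.comp hφ).aemeasurable (ae_of_all _ (hVb <| φ ·))
  refine hP.integral_le_div_of_le_integral hγ1 ((hVint ξ).sub hVbφ).abs
    (.of_mem_Icc 0 1 (measurable_latentTransitionLoss Pb hφ).aemeasurable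
      (ae_of_all _ (latentTransitionLoss_mem_Icc Pb φ))) fun s ↦ ?_
  exact abs_sub_le_discounted_integral hφ hγ0 (fun s ↦ hVint (P s)) hVtarget hVbellman hVb
    hVbtarget hVbbellman s

end Reachability

theorem pac_value_difference_reachability_general
    {S : Type*} [MeasurableSpace S]
    {Sb : Type*} [Fintype Sb] [MeasurableSpace Sb] [DiscreteMeasurableSpace Sb]
    (P : Kernel S S) [IsMarkovKernel P]
    (Pb : Sb → PMF Sb)
    (φ : S → Sb) (hφ : Measurable φ)
    (ξ : Measure S) [IsProbabilityMeasure ξ]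
    (hinv : ∀ A : Set S, MeasurableSet A → ξ A = ∫⁻ s, P s A ∂ξ)
    (γ : ℝ) (hγ0 : 0 ≤ γ) (hγ1 : γ < 1)
    (Bb : Set Sb)
    (V : S → ℝ) (hVmeas : Measurable V)
    (hV0 : ∀ s, 0 ≤ V s) (hV1 : ∀ s, V s ≤ 1)
    (hVtarget : ∀ s, φ s ∈ Bb → V s = 1)
    (hVbellman : ∀ s, φ s ∉ Bb → V s = γ * ∫ s', V s' ∂(P s))
    (Vb : Sb → ℝ) (hVb0 : ∀ x, 0 ≤ Vb x) (hVb1 : ∀ x, Vb x ≤ 1)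
    (hVbtarget : ∀ x ∈ Bb, Vb x = 1)
    (hVbbellman : ∀ x, x ∉ Bb → Vb x = γ * ∑ y, ((Pb x) y).toReal * Vb y)
    (K : ℝ) (hK : 0 ≤ K)
    (ε δ : ℝ) (hε : ε ∈ Set.Ioo (0 : ℝ) 1) (hδ : δ ∈ Set.Ioo (0 : ℝ) 1)
    {Ω : Type*} [MeasurableSpace Ω] (Pr : Measure Ω) [IsProbabilityMeasure Pr]
    (T : ℕ) (Z : Fin T → Ω → S × S)
    (hZmeas : ∀ t, Measurable (Z t))
    (hZindep : iIndepFun Z Pr)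
    (hZlaw : ∀ t, Pr.map (Z t) = ξ.compProd P)
    (hT : ⌈-Real.log (δ / 4) * (1 + γ * K) ^ 2 / (2 * ε ^ 2 * (1 - γ) ^ 2)⌉₊ ≤ T) :
    ENNReal.ofReal (1 - δ) ≤
      Pr {ω | ∫ s, |V s - Vb (φ s)| ∂ξ ≤
        γ * ((1 / (T : ℝ)) *
            ∑ t, (1 - ((Pb (φ (Z t ω).1)) (φ (Z t ω).2)).toReal)) / (1 - γ) +
          γ * ε / (1 + γ * K)} := by
  obtain ⟨hε0, -⟩ := hε
  obtain ⟨hδ0, -⟩ := hδ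
  have h1γ : 0 < 1 - γ := sub_pos.2 hγ1
  have h1γK : 0 < 1 + γ * K := by positivity
  set c := ε * (1 - γ) / (1 + γ * K) with hc_def
  have hc : 0 < c := by positivity
  have hTc : -Real.log (δ / 4) / (2 * c ^ 2) ≤ T :=
    le_of_eq_of_le (by rw [hc_def]; field_simp) (Nat.ceil_le.1 hT)
  have hD := integral_abs_sub_le_of_bellman (Kernel.invariant_of_forall_lintegral hinv) hφ hγ0 hγ1
    hVmeas (fun s ↦ ⟨hV0 s, hV1 s⟩) hVtarget hVbellman (fun x ↦ ⟨hVb0 x, hVb1 x⟩) hVbtarget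
    hVbbellman
  have hgood := one_sub_exp_le_measureReal_integral_sub_lt_mean hZmeas hZindep hZlaw
    (measurable_latentTransitionLoss Pb hφ) (latentTransitionLoss_mem_Icc Pb φ) hc.le
  have hexp := exp_neg_two_mul_sq_le_of_neg_log_div_le hδ0 hc hTc
  calc ENNReal.ofReal (1 - δ)
      ≤ Pr {ω | ∫ z, latentTransitionLoss Pb φ z ∂(ξ ⊗ₘ P) - c <
          1 / (T : ℝ) * ∑ t, latentTransitionLoss Pb φ (Z t ω)} := by
        rw [← ofReal_measureReal]
        exact ENNReal.ofReal_le_ofReal (by linarith)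
    _ ≤ _ := measure_mono fun ω hω ↦ by
        calc _ ≤ _ := hD
          _ ≤ γ * (1 / (T : ℝ) * ∑ t, latentTransitionLoss Pb φ (Z t ω) + c) / (1 - γ) := by
            gcongr
            exact (sub_lt_iff_lt_add.1 hω).le
          _ = _ := by simp only [latentTransitionLoss, hc_def]; field_simp

/-- PAC value-difference theorem for discounted reachability: with probability at least `1-δ`
over `T ≥ ⌈-log(δ/4)·(1+γK)²/(2ε²(1-γ)²)⌉` i.i.d. sample pairs drawn from `ξ ⊗ P`, the
expected value difference between the ground and latent reachability values is bounded by
`γ·L̂_P/(1-γ) + γ·ε/(1+γK)`, where `L̂_P` is the empirical transition loss. -/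
theorem pac_value_difference_reachability
    {S : Type*} [MeasurableSpace S]
    {Sb : Type*} [Fintype Sb] [Nonempty Sb] [MeasurableSpace Sb] [DiscreteMeasurableSpace Sb]
    (P : Kernel S S) [IsMarkovKernel P]
    (Pb : Sb → PMF Sb)
    (φ : S → Sb) (hφ : Measurable φ)
    (ξ : Measure S) [IsProbabilityMeasure ξ]
    (hinv : ∀ A : Set S, MeasurableSet A → ξ A = ∫⁻ s, P s A ∂ξ)
    (γ : ℝ) (hγ0 : 0 ≤ γ) (hγ1 : γ < 1)
    (Bb : Set Sb)
    (V : S → ℝ) (hVmeas : Measurable V)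
    (hV0 : ∀ s, 0 ≤ V s) (hV1 : ∀ s, V s ≤ 1)
    (hVtarget : ∀ s, φ s ∈ Bb → V s = 1)
    (hVbellman : ∀ s, φ s ∉ Bb → V s = γ * ∫ s', V s' ∂(P s))
    (Vb : Sb → ℝ) (hVb0 : ∀ x, 0 ≤ Vb x) (hVb1 : ∀ x, Vb x ≤ 1)
    (hVbtarget : ∀ x ∈ Bb, Vb x = 1)
    (hVbbellman : ∀ x, x ∉ Bb → Vb x = γ * ∑ y, ((Pb x) y).toReal * Vb y)
    (K : ℝ) (hK : 0 ≤ K)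
    (ε δ : ℝ) (hε : ε ∈ Set.Ioo (0 : ℝ) 1) (hδ : δ ∈ Set.Ioo (0 : ℝ) 1)
    {Ω : Type*} [MeasurableSpace Ω] (Pr : Measure Ω) [IsProbabilityMeasure Pr]
    (T : ℕ) (Z : Fin T → Ω → S × S)
    (hZmeas : ∀ t, Measurable (Z t))
    (hZindep : iIndepFun Z Pr)
    (hZlaw : ∀ t, Pr.map (Z t) = ξ.compProd P)
    (hT : ⌈-Real.log (δ / 4) * (1 + γ * K) ^ 2 / (2 * ε ^ 2 * (1 - γ) ^ 2)⌉₊ ≤ T) :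
    ENNReal.ofReal (1 - δ) ≤
      Pr {ω | ∫ s, |V s - Vb (φ s)| ∂ξ ≤
        γ * ((1 / (T : ℝ)) *
            ∑ t, (1 - ((Pb (φ (Z t ω).1)) (φ (Z t ω).2)).toReal)) / (1 - γ) +
          γ * ε / (1 + γ * K)} :=
  pac_value_difference_reachability_general P Pb φ hφ ξ hinv γ hγ0 hγ1 Bb V hVmeas hV0 hV1 hVtarget
    hVbellman Vb hVb0 hVb1 hVbtarget hVbbellman K hK ε δ hε hδ Pr T Z hZmeas hZindep hZlaw hT
end

section
/- ∫ |V(s) − V̄(φ(s))| dξ(s) ≤ γ L_P/(1−γ). -/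
/-!
Outside the target set both value functions obey a one-step Bellman equation, so the gap
`|V - V̄ ∘ φ|` at `s` is at most `γ` times the expected gap after one ground step plus `γ` times
the one-step transition error, and the latter is at most the total variation distance because
`V̄` takes values in `[0, 1]`. Integrating against the invariant `ξ` turns the expected gap after
one step back into the expected gap, and solving `x ≤ γ x + γ L_P` for `x` gives the bound.
-/

open MeasureTheory ProbabilityTheory

lemma integrable_of_nonneg_of_le_one {α : Type*} [MeasurableSpace α] {μ : Measure α}
    [IsFiniteMeasure μ] {f : α → ℝ} (hf : Measurable f) (hf0 : ∀ x, 0 ≤ f x)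
    (hf1 : ∀ x, f x ≤ 1) : Integrable f μ :=
  .of_bound hf.aestronglyMeasurable 1 <| ae_of_all _ fun x ↦ by
    rw [Real.norm_eq_abs, abs_of_nonneg (hf0 x)]; exact hf1 x

section TotalVariation

variable {X : Type*} [MeasurableSpace X]

lemma tvDist_comm (μ ν : Measure X) : tvDist μ ν = tvDist ν μ := by
  simp only [tvDist, abs_sub_comm]

variable (μ ν : Measure X) [IsProbabilityMeasure μ] [IsProbabilityMeasure ν]

lemma abs_toReal_measure_sub_le_one (A : Set X) : |(μ A).toReal - (ν A).toReal| ≤ 1 := by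
  have hμ : (μ A).toReal ≤ 1 := measureReal_le_one
  have hν : (ν A).toReal ≤ 1 := measureReal_le_one
  rw [abs_sub_le_iff]
  constructor <;> linarith [ENNReal.toReal_nonneg (a := μ A), ENNReal.toReal_nonneg (a := ν A)]

lemma le_tvDist {A : Set X} (hA : MeasurableSet A) :
    |(μ A).toReal - (ν A).toReal| ≤ tvDist μ ν :=
  le_ciSup (f := fun A : {A : Set X // MeasurableSet A} ↦ |(μ A.1).toReal - (ν A.1).toReal|)
    ⟨1, by rintro _ ⟨A, rfl⟩; exact abs_toReal_measure_sub_le_one μ ν A⟩ ⟨A, hA⟩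

lemma tvDist_nonneg : 0 ≤ tvDist μ ν :=
  (abs_nonneg _).trans (le_tvDist μ ν .empty)

lemma tvDist_le_one : tvDist μ ν ≤ 1 :=
  Real.iSup_le (fun A ↦ abs_toReal_measure_sub_le_one μ ν A.1) zero_le_one

end TotalVariation

lemma measurable_tvDist {X β : Type*} [MeasurableSpace X] [Finite X] [MeasurableSpace β]
    {f g : β → Measure X} (hf : Measurable f) (hg : Measurable g) :
    Measurable fun b ↦ tvDist (f b) (g b) :=
  .iSup fun A ↦ (((Measure.measurable_coe A.2).comp hf).ennreal_toReal.sub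
    ((Measure.measurable_coe A.2).comp hg).ennreal_toReal).abs

section FiniteTotalVariation

variable {X : Type*} [Fintype X] [MeasurableSpace X] [MeasurableSingletonClass X]
  (μ ν : Measure X) [IsProbabilityMeasure μ] [IsProbabilityMeasure ν]
  {f : X → ℝ} (hf0 : ∀ x, 0 ≤ f x) (hf1 : ∀ x, f x ≤ 1)
include hf0 hf1

lemma integral_sub_integral_le_tvDist : ∫ x, f x ∂μ - ∫ x, f x ∂ν ≤ tvDist μ ν := by
  classical
  let A : Finset X := {x | ν.real {x} ≤ μ.real {x}}
  calc ∫ x, f x ∂μ - ∫ x, f x ∂ν = ∑ x, (μ.real {x} - ν.real {x}) * f x := by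
        simp only [integral_fintype (.of_finite), smul_eq_mul, ← Finset.sum_sub_distrib, sub_mul]
    _ ≤ ∑ x ∈ A, (μ.real {x} - ν.real {x}) := by
        rw [Finset.sum_filter]
        gcongr with x
        split_ifs with hx
        · nlinarith [hf1 x]
        · nlinarith [hf0 x]
    _ = (μ A).toReal - (ν A).toReal := by
        rw [Finset.sum_sub_distrib, sum_measureReal_singleton, sum_measureReal_singleton]; rfl
    _ ≤ tvDist μ ν := (le_abs_self _).trans (le_tvDist μ ν A.measurableSet)

lemma abs_integral_sub_integral_le_tvDist : |∫ x, f x ∂μ - ∫ x, f x ∂ν| ≤ tvDist μ ν :=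
  abs_sub_le_iff.2 ⟨integral_sub_integral_le_tvDist μ ν hf0 hf1,
    tvDist_comm μ ν ▸ integral_sub_integral_le_tvDist ν μ hf0 hf1⟩

end FiniteTotalVariation

lemma abs_integral_sub_integral_le_integral_abs_add_tvDist {S Y : Type*} [MeasurableSpace S]
    [Fintype Y] [MeasurableSpace Y] [DiscreteMeasurableSpace Y]
    {μ : Measure S} [IsProbabilityMeasure μ] {ν : Measure Y} [IsProbabilityMeasure ν]
    {φ : S → Y} (hφ : Measurable φ) {V : S → ℝ} (hV : Integrable V μ)
    {W : Y → ℝ} (hW0 : ∀ y, 0 ≤ W y) (hW1 : ∀ y, W y ≤ 1) :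
    |∫ s, V s ∂μ - ∫ y, W y ∂ν| ≤ ∫ s, |V s - W (φ s)| ∂μ + tvDist (μ.map φ) ν := by
  have : IsProbabilityMeasure (μ.map φ) := Measure.isProbabilityMeasure_map hφ.aemeasurable
  have hWφ : Integrable (fun s ↦ W (φ s)) μ :=
    integrable_of_nonneg_of_le_one (Measurable.of_discrete.comp hφ) (hW0 <| φ ·) (hW1 <| φ ·)
  have hWmap : ∫ s, W (φ s) ∂μ = ∫ y, W y ∂(μ.map φ) :=
    (integral_map hφ.aemeasurable Measurable.of_discrete.aestronglyMeasurable).symm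
  calc |∫ s, V s ∂μ - ∫ y, W y ∂ν|
      = |∫ s, (V s - W (φ s)) ∂μ + (∫ y, W y ∂(μ.map φ) - ∫ y, W y ∂ν)| := by
        rw [integral_sub hV hWφ, hWmap]; congr 1; ring
    _ ≤ |∫ s, (V s - W (φ s)) ∂μ| + |∫ y, W y ∂(μ.map φ) - ∫ y, W y ∂ν| := abs_add_le _ _
    _ ≤ ∫ s, |V s - W (φ s)| ∂μ + tvDist (μ.map φ) ν :=
        add_le_add abs_integral_le_integral_abs (abs_integral_sub_integral_le_tvDist _ _ hW0 hW1)

namespace ProbabilityTheory.Kernel.Invariant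

variable {α : Type*} [MeasurableSpace α] {κ : Kernel α α} {μ : Measure α}
  (hκ : κ.Invariant μ) {f : α → ℝ} (hf : Integrable f μ)
include hκ hf

lemma integrable_comp_const : Integrable f ((κ ∘ₖ Kernel.const Unit μ) ()) := by
  rwa [← Measure.comp_eq_comp_const_apply, hκ.def]

lemma integrable_integral : Integrable (fun x ↦ ∫ y, f y ∂κ x) μ := by
  simpa using (hκ.integrable_comp_const hf).integral_comp

lemma integral_integral : ∫ x, ∫ y, f y ∂κ x ∂μ = ∫ x, f x ∂μ := by
  simpa [← Measure.comp_eq_comp_const_apply, hκ.def] using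
    (Kernel.integral_comp (hκ.integrable_comp_const hf)).symm

lemma integral_le_div_one_sub {t : α → ℝ} (ht : Integrable t μ) {γ : ℝ} (hγ : γ < 1)
    (h : ∀ x, f x ≤ γ * ∫ y, f y ∂κ x + γ * t x) :
    ∫ x, f x ∂μ ≤ γ * (∫ x, t x ∂μ) / (1 - γ) := by
  have hf' := hκ.integrable_integral hf
  have := integral_mono hf ((hf'.const_mul γ).add (ht.const_mul γ)) h
  rw [integral_add' (hf'.const_mul γ) (ht.const_mul γ), integral_const_mul, integral_const_mul,
    hκ.integral_integral hf] at this
  rw [le_div_iff₀ (sub_pos.2 hγ)]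
  linarith

end ProbabilityTheory.Kernel.Invariant

theorem value_difference_reachability_general
    {S : Type*} [MeasurableSpace S]
    {Sb : Type*} [Fintype Sb] [MeasurableSpace Sb] [DiscreteMeasurableSpace Sb]
    (P : Kernel S S) [IsMarkovKernel P]
    (Pb : Sb → PMF Sb)
    (φ : S → Sb) (hφ : Measurable φ)
    (ξ : Measure S) [IsProbabilityMeasure ξ]
    (hinv : ∀ A : Set S, MeasurableSet A → ξ A = ∫⁻ s, P s A ∂ξ)
    (γ : ℝ) (hγ0 : 0 ≤ γ) (hγ1 : γ < 1)
    (Bb : Set Sb)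
    (V : S → ℝ) (hVmeas : Measurable V)
    (hV0 : ∀ s, 0 ≤ V s) (hV1 : ∀ s, V s ≤ 1)
    (hVtarget : ∀ s, φ s ∈ Bb → V s = 1)
    (hVbellman : ∀ s, φ s ∉ Bb → V s = γ * ∫ s', V s' ∂(P s))
    (Vb : Sb → ℝ) (hVb0 : ∀ x, 0 ≤ Vb x) (hVb1 : ∀ x, Vb x ≤ 1)
    (hVbtarget : ∀ x ∈ Bb, Vb x = 1)
    (hVbbellman : ∀ x, x ∉ Bb → Vb x = γ * ∑ y, ((Pb x) y).toReal * Vb y) :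
    ∫ s, |V s - Vb (φ s)| ∂ξ ≤
      γ * (∫ s, tvDist ((P s).map φ) ((Pb (φ s)).toMeasure) ∂ξ) / (1 - γ) := by
  have hξ : P.Invariant ξ := Measure.ext fun A hA ↦ by
    rw [Measure.bind_apply hA P.aemeasurable, hinv A hA]
  have hgap : Integrable (fun s ↦ |V s - Vb (φ s)|) ξ :=
    integrable_of_nonneg_of_le_one (hVmeas.sub (Measurable.of_discrete.comp hφ)).abs
      (fun s ↦ abs_nonneg _)
      (fun s ↦ abs_sub_le_iff.2 ⟨by linarith [hV1 s, hVb0 (φ s)], by linarith [hV0 s, hVb1 (φ s)]⟩)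
  have (s : S) : IsProbabilityMeasure ((P s).map φ) :=
    Measure.isProbabilityMeasure_map hφ.aemeasurable
  have hloss : Integrable (fun s ↦ tvDist ((P s).map φ) ((Pb (φ s)).toMeasure)) ξ := by
    have hmap : (fun s ↦ (P s).map φ) = P.map φ := funext fun s ↦ (P.map_apply hφ s).symm
    refine integrable_of_nonneg_of_le_one (measurable_tvDist (hmap ▸ (P.map φ).measurable)
      ((Measurable.of_discrete (f := fun x ↦ (Pb x).toMeasure)).comp hφ))
      (fun s ↦ tvDist_nonneg _ _) (fun s ↦ tvDist_le_one _ _)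
  refine hξ.integral_le_div_one_sub hgap hloss hγ1 fun s ↦ ?_
  by_cases hs : φ s ∈ Bb
  · rw [hVtarget s hs, hVbtarget _ hs, sub_self, abs_zero]
    have : 0 ≤ ∫ s', |V s' - Vb (φ s')| ∂P s := integral_nonneg fun _ ↦ abs_nonneg _
    have := tvDist_nonneg ((P s).map φ) ((Pb (φ s)).toMeasure)
    positivity
  · have hVint : Integrable V (P s) := integrable_of_nonneg_of_le_one hVmeas hV0 hV1
    have hsum : ∑ y, (Pb (φ s) y).toReal * Vb y = ∫ y, Vb y ∂(Pb (φ s)).toMeasure := by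
      simp only [PMF.integral_eq_sum, smul_eq_mul]
    rw [hVbellman s hs, hVbbellman _ hs, hsum, ← mul_sub,
      abs_mul, abs_of_nonneg hγ0, ← mul_add]
    exact mul_le_mul_of_nonneg_left
      (abs_integral_sub_integral_le_integral_abs_add_tvDist hφ hVint hVb0 hVb1) hγ0

/-- Value-difference bound for discounted reachability: the expected (under the stationary
distribution `ξ`) absolute difference between the ground value function `V` and the latent
value function `Vb` composed with the embedding `φ` is at most `γ·L_P/(1-γ)`, where `L_P`
is the local transition loss. -/
theorem value_difference_reachability
    {S : Type*} [MeasurableSpace S]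
    {Sb : Type*} [Fintype Sb] [Nonempty Sb] [MeasurableSpace Sb] [DiscreteMeasurableSpace Sb]
    (P : Kernel S S) [IsMarkovKernel P]
    (Pb : Sb → PMF Sb)
    (φ : S → Sb) (hφ : Measurable φ)
    (ξ : Measure S) [IsProbabilityMeasure ξ]
    (hinv : ∀ A : Set S, MeasurableSet A → ξ A = ∫⁻ s, P s A ∂ξ)
    (γ : ℝ) (hγ0 : 0 ≤ γ) (hγ1 : γ < 1)
    (Bb : Set Sb)
    (V : S → ℝ) (hVmeas : Measurable V)
    (hV0 : ∀ s, 0 ≤ V s) (hV1 : ∀ s, V s ≤ 1)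
    (hVtarget : ∀ s, φ s ∈ Bb → V s = 1)
    (hVbellman : ∀ s, φ s ∉ Bb → V s = γ * ∫ s', V s' ∂(P s))
    (Vb : Sb → ℝ) (hVb0 : ∀ x, 0 ≤ Vb x) (hVb1 : ∀ x, Vb x ≤ 1)
    (hVbtarget : ∀ x ∈ Bb, Vb x = 1)
    (hVbbellman : ∀ x, x ∉ Bb → Vb x = γ * ∑ y, ((Pb x) y).toReal * Vb y) :
    ∫ s, |V s - Vb (φ s)| ∂ξ ≤
      γ * (∫ s, tvDist ((P s).map φ) ((Pb (φ s)).toMeasure) ∂ξ) / (1 - γ) :=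
  value_difference_reachability_general P Pb φ hφ ξ hinv γ hγ0 hγ1 Bb V hVmeas hV0 hV1 hVtarget
    hVbellman Vb hVb0 hVb1 hVbtarget hVbbellman
end

section
/- Let r : S → ℝ and r̄ : S̄ → ℝ be bounded measurable reward functions, let K̄ ≥ 0, and let L_R = ∫ |r(s) − r̄(φ(s))| dξ(s). Assume that (i) for every s ∈ S, d(inl s, inr φ(s)) ≤ (1−γ)|r(s) − r̄(φ(s))| + γ · W_d(κ(inl s), κ(inr φ(s))), and (ii) d(inr x̄, inr ȳ) ≤ K̄ for all x̄, ȳ ∈ S̄. Then ∫ d(inl s, inr φ(s)) dξ(s) ≤ L_R + γ K̄ L_P/(1−γ). -/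
open MeasureTheory ProbabilityTheory

/-- Dual (Kantorovich) Wasserstein distance between two measures with respect to a cost
function `d`: the supremum over bounded measurable `d`-Lipschitz functions of the absolute
difference of their integrals. -/
noncomputable def wassDual {X : Type*} [MeasurableSpace X] (d : X → X → ℝ)
    (μ ν : Measure X) : ℝ :=
  ⨆ f : {f : X → ℝ // Measurable f ∧ (∃ C, ∀ x, |f x| ≤ C) ∧ ∀ x y, |f x - f y| ≤ d x y},
    |(∫ x, f.1 x ∂μ) - ∫ x, f.1 x ∂ν|

/-!
Integrating the fixed-point inequality against `ξ` bounds `D = ∫ d(inl s, inr φ(s)) dξ` by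
`(1 - γ) L_R + γ ∫ W_d(κ(inl s), κ(inr φ(s))) dξ`. Passing through `inr∗φ∗P(·|s)`, each
Wasserstein term is at most `∫ d(inl s', inr φ(s')) dP(s'|s)`, whose `ξ`-average is again `D` by
invariance, plus `K̄ · TV(φ∗P(·|s), P̄(φ(s)))`, because `d ≤ K̄` on the latent part.
Hence `(1 - γ) D ≤ (1 - γ) L_R + γ K̄ L_P`.
-/

section TotalVariation

variable {X : Type*} [MeasurableSpace X]

variable (μ ν : Measure X) [IsProbabilityMeasure μ] [IsProbabilityMeasure ν]

lemma abs_measureReal_sub_le_one (A : Set X) : |μ.real A - ν.real A| ≤ 1 :=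
  abs_sub_le_of_nonneg_of_le measureReal_nonneg measureReal_le_one
    measureReal_nonneg measureReal_le_one

lemma abs_measureReal_sub_le_tvDist {A : Set X} (hA : MeasurableSet A) :
    |μ.real A - ν.real A| ≤ tvDist μ ν :=
  le_ciSup (f := fun A : {A : Set X // MeasurableSet A} ↦ |μ.real A - ν.real A|)
    ⟨1, Set.forall_mem_range.2 fun A ↦ abs_measureReal_sub_le_one μ ν A⟩ ⟨A, hA⟩

end TotalVariation

lemma measurable_tvDist_s7 {S Y : Type*} [MeasurableSpace S] [MeasurableSpace Y] [Finite Y]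
    {μ ν : S → Measure Y} (hμ : Measurable μ) (hν : Measurable ν) :
    Measurable fun s ↦ tvDist (μ s) (ν s) :=
  Measurable.iSup fun A ↦
    ((Measure.measurable_coe A.2).comp hμ).ennreal_toReal.sub
      ((Measure.measurable_coe A.2).comp hν).ennreal_toReal |>.abs

section FiniteSpace

variable {Y : Type*} [Fintype Y] [MeasurableSpace Y] [DiscreteMeasurableSpace Y]
  (μ ν : Measure Y) [IsProbabilityMeasure μ] [IsProbabilityMeasure ν]

lemma sum_max_measureReal_sub_le_tvDist :
    ∑ y, max (μ.real {y} - ν.real {y}) 0 ≤ tvDist μ ν := by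
  classical
  set t := Finset.univ.filter fun y ↦ 0 ≤ μ.real {y} - ν.real {y}
  calc ∑ y, max (μ.real {y} - ν.real {y}) 0 = ∑ y ∈ t, (μ.real {y} - ν.real {y}) := by
        rw [Finset.sum_filter]
        exact Finset.sum_congr rfl fun y _ ↦ by split_ifs with h <;> simp [h, le_of_not_ge]
    _ = μ.real t - ν.real t := by
        rw [Finset.sum_sub_distrib, sum_measureReal_singleton, sum_measureReal_singleton]
    _ ≤ tvDist μ ν := (le_abs_self _).trans (abs_measureReal_sub_le_tvDist μ ν .of_discrete)

variable {h : Y → ℝ} {K : ℝ}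

lemma integral_sub_integral_le_mul_tvDist (hK : ∀ x y, |h x - h y| ≤ K) :
    ∫ y, h y ∂μ - ∫ y, h y ∂ν ≤ K * tvDist μ ν := by
  have := nonempty_of_isProbabilityMeasure μ
  obtain ⟨y₀, hy₀⟩ := Finite.exists_min h
  have hK₀ : 0 ≤ K := (abs_nonneg _).trans (hK y₀ y₀)
  calc ∫ y, h y ∂μ - ∫ y, h y ∂ν
      = ∑ y, (h y - h y₀) * (μ.real {y} - ν.real {y}) := by
        simp only [integral_fintype (Integrable.of_finite), smul_eq_mul, sub_mul, mul_sub,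
          Finset.sum_sub_distrib, ← Finset.mul_sum, sum_measureReal_singleton]
        simp [mul_comm]
    _ ≤ ∑ y, K * max (μ.real {y} - ν.real {y}) 0 := by
        -- centred at a minimiser of `h`, the terms where `ν` outweighs `μ` are nonpositive
        refine Finset.sum_le_sum fun y _ ↦ ?_
        have h₀ : 0 ≤ h y - h y₀ := sub_nonneg.2 (hy₀ y)
        calc (h y - h y₀) * (μ.real {y} - ν.real {y})
            ≤ (h y - h y₀) * max (μ.real {y} - ν.real {y}) 0 :=
              mul_le_mul_of_nonneg_left (le_max_left _ _) h₀
          _ ≤ K * max (μ.real {y} - ν.real {y}) 0 :=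
              mul_le_mul_of_nonneg_right ((le_abs_self _).trans (hK y y₀)) (le_max_right _ _)
    _ ≤ K * tvDist μ ν := by
        rw [← Finset.mul_sum]
        exact mul_le_mul_of_nonneg_left (sum_max_measureReal_sub_le_tvDist μ ν) hK₀

lemma abs_integral_sub_integral_le_mul_tvDist (hK : ∀ x y, |h x - h y| ≤ K) :
    |∫ y, h y ∂μ - ∫ y, h y ∂ν| ≤ K * tvDist μ ν :=
  abs_sub_le_iff.2 ⟨integral_sub_integral_le_mul_tvDist μ ν hK,
    tvDist_comm μ ν ▸ integral_sub_integral_le_mul_tvDist ν μ hK⟩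

end FiniteSpace

lemma abs_integral_comp_sub_le_integral {S X : Type*} [MeasurableSpace S] [MeasurableSpace X]
    {μ : Measure S} [IsFiniteMeasure μ] {d : X → X → ℝ} {f : X → ℝ} (hf : Measurable f)
    {C : ℝ} (hC : ∀ x, |f x| ≤ C) (hfd : ∀ x y, |f x - f y| ≤ d x y) {u v : S → X}
    (hu : Measurable u) (hv : Measurable v) (hd : Integrable (fun s ↦ d (u s) (v s)) μ) :
    |∫ s, f (u s) ∂μ - ∫ s, f (v s) ∂μ| ≤ ∫ s, d (u s) (v s) ∂μ := by
  have hfu : Integrable (fun s ↦ f (u s)) μ :=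
    .of_bound (hf.comp hu).aestronglyMeasurable C (ae_of_all μ fun s ↦ hC (u s))
  have hfv : Integrable (fun s ↦ f (v s)) μ :=
    .of_bound (hf.comp hv).aestronglyMeasurable C (ae_of_all μ fun s ↦ hC (v s))
  rw [← integral_sub hfu hfv]
  exact norm_integral_le_of_norm_le (f := fun s ↦ f (u s) - f (v s)) hd
    (ae_of_all μ fun s ↦ hfd (u s) (v s))

lemma wassDual_map_inl_map_inr_le {S Y : Type*} [MeasurableSpace S] [Fintype Y]
    [MeasurableSpace Y] [DiscreteMeasurableSpace Y] {d : S ⊕ Y → S ⊕ Y → ℝ}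
    (hd₀ : ∀ x y, 0 ≤ d x y) {φ : S → Y} (hφ : Measurable φ) (μ : Measure S)
    [IsProbabilityMeasure μ] (ν : Measure Y) [IsProbabilityMeasure ν]
    (hdi : Integrable (fun s ↦ d (.inl s) (.inr (φ s))) μ) {K : ℝ}
    (hK : ∀ x y, d (.inr x) (.inr y) ≤ K) :
    wassDual d (μ.map .inl) (ν.map .inr) ≤
      ∫ s, d (.inl s) (.inr (φ s)) ∂μ + K * tvDist (μ.map φ) ν := by
  have : IsProbabilityMeasure (μ.map φ) := Measure.isProbabilityMeasure_map hφ.aemeasurable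
  have : Nonempty {f : S ⊕ Y → ℝ // Measurable f ∧ (∃ C, ∀ x, |f x| ≤ C) ∧
      ∀ x y, |f x - f y| ≤ d x y} :=
    ⟨⟨0, measurable_const, ⟨0, by simp⟩, by simpa using hd₀⟩⟩
  refine ciSup_le fun ⟨f, hf, ⟨C, hC⟩, hfd⟩ ↦ ?_
  rw [integral_map measurable_inl.aemeasurable hf.aestronglyMeasurable,
    integral_map measurable_inr.aemeasurable hf.aestronglyMeasurable]
  calc |∫ s, f (.inl s) ∂μ - ∫ y, f (.inr y) ∂ν|
      ≤ |∫ s, f (.inl s) ∂μ - ∫ s, f (.inr (φ s)) ∂μ|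
        + |∫ s, f (.inr (φ s)) ∂μ - ∫ y, f (.inr y) ∂ν| := abs_sub_le _ _ _
    _ ≤ ∫ s, d (.inl s) (.inr (φ s)) ∂μ + K * tvDist (μ.map φ) ν := by
        refine add_le_add (abs_integral_comp_sub_le_integral hf hC hfd measurable_inl
          (measurable_inr.comp hφ) hdi) ?_
        rw [← integral_map (f := fun y ↦ f (.inr y)) hφ.aemeasurable
          (hf.comp measurable_inr).aestronglyMeasurable]
        exact abs_integral_sub_integral_le_mul_tvDist _ _ fun x y ↦ (hfd _ _).trans (hK x y)

lemma ProbabilityTheory.Kernel.Invariant.integral_integral_s7 {S E : Type*} [MeasurableSpace S]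
    [NormedAddCommGroup E] [NormedSpace ℝ E] {P : Kernel S S} {ξ : Measure S}
    (hP : P.Invariant ξ) {f : S → E} (hf : Integrable f ξ) :
    ∫ s, ∫ t, f t ∂P s ∂ξ = ∫ s, f s ∂ξ := by
  rw [← hP.def, Measure.comp_eq_comp_const_apply] at hf
  conv_rhs => rw [← hP.def, Measure.comp_eq_comp_const_apply, Kernel.integral_comp hf]
  simp

lemma ProbabilityTheory.Kernel.Invariant.integral_le_of_le_discounted {S : Type*}
    [MeasurableSpace S] {P : Kernel S S} [IsMarkovKernel P] {ξ : Measure S} [IsFiniteMeasure ξ]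
    (hP : P.Invariant ξ) {γ : ℝ} (hγ : γ < 1) {g R c : S → ℝ} (hg : Measurable g) {C : ℝ}
    (hgC : ∀ s, ‖g s‖ ≤ C) (hR : Integrable R ξ) (hc : Integrable c ξ)
    (h : ∀ s, g s ≤ (1 - γ) * R s + γ * (∫ t, g t ∂P s + c s)) :
    ∫ s, g s ∂ξ ≤ ∫ s, R s ∂ξ + γ * (∫ s, c s ∂ξ) / (1 - γ) := by
  have hg_int (μ : Measure S) [IsFiniteMeasure μ] : Integrable g μ :=
    .of_bound hg.aestronglyMeasurable C (ae_of_all μ hgC)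
  have hPg_int : Integrable (fun s ↦ ∫ t, g t ∂P s) ξ :=
    .of_bound hg.stronglyMeasurable.integral_kernel.aestronglyMeasurable C
      (ae_of_all ξ fun s ↦ by simpa using norm_integral_le_of_norm_le_const (ae_of_all (P s) hgC))
  have hRHS_int : Integrable (fun s ↦ γ * (∫ t, g t ∂P s + c s)) ξ :=
    (hPg_int.add hc).const_mul γ
  have hD : ∫ s, g s ∂ξ ≤ (1 - γ) * ∫ s, R s ∂ξ + γ * (∫ s, g s ∂ξ + ∫ s, c s ∂ξ) :=
    calc ∫ s, g s ∂ξ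
        ≤ ∫ s, (1 - γ) * R s + γ * (∫ t, g t ∂P s + c s) ∂ξ :=
          integral_mono (hg_int ξ) ((hR.const_mul _).add hRHS_int) h
      _ = (1 - γ) * ∫ s, R s ∂ξ + γ * (∫ s, g s ∂ξ + ∫ s, c s ∂ξ) := by
          rw [integral_add (hR.const_mul _) hRHS_int, integral_const_mul, integral_const_mul,
            integral_add hPg_int hc, hP.integral_integral_s7 (hg_int ξ)]
  rw [← sub_le_iff_le_add', le_div_iff₀ (sub_pos.2 hγ)]
  linear_combination hD

theorem bisimulation_bound_rewards_general
    {S : Type*} [MeasurableSpace S]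
    {Sb : Type*} [Fintype Sb] [MeasurableSpace Sb] [DiscreteMeasurableSpace Sb]
    (P : Kernel S S) [IsMarkovKernel P]
    (Pb : Sb → PMF Sb)
    (φ : S → Sb) (hφ : Measurable φ)
    (ξ : Measure S) [IsProbabilityMeasure ξ]
    (hinv : ∀ A : Set S, MeasurableSet A → ξ A = ∫⁻ s, P s A ∂ξ)
    (γ : ℝ) (hγ0 : 0 ≤ γ) (hγ1 : γ < 1)
    (d : (S ⊕ Sb) → (S ⊕ Sb) → ℝ)
    (hdmeas : Measurable (Function.uncurry d))
    (hd01 : ∀ x y, d x y ∈ Set.Icc (0 : ℝ) 1)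
    (r : S → ℝ) (hrmeas : Measurable r) (hrbdd : ∃ C, ∀ s, |r s| ≤ C)
    (rb : Sb → ℝ)
    (Kb : ℝ)
    (hfix : ∀ s : S,
      d (Sum.inl s) (Sum.inr (φ s)) ≤
        (1 - γ) * |r s - rb (φ s)| +
          γ * wassDual d (((P s).map Sum.inl : Measure (S ⊕ Sb)))
            (((Pb (φ s)).toMeasure.map Sum.inr : Measure (S ⊕ Sb))))
    (hdK : ∀ x y : Sb, d (Sum.inr x) (Sum.inr y) ≤ Kb) :
    ∫ s, d (Sum.inl s) (Sum.inr (φ s)) ∂ξ ≤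
      (∫ s, |r s - rb (φ s)| ∂ξ) +
        γ * Kb * (∫ s, tvDist ((P s).map φ) ((Pb (φ s)).toMeasure) ∂ξ) / (1 - γ) := by
  have hP : P.Invariant ξ := Measure.ext fun A hA ↦ by
    rw [Measure.bind_apply hA P.aemeasurable]
    exact (hinv A hA).symm
  have := fun s ↦ Measure.isProbabilityMeasure_map (μ := P s) hφ.aemeasurable
  set g : S → ℝ := fun s ↦ d (.inl s) (.inr (φ s))
  set R : S → ℝ := fun s ↦ |r s - rb (φ s)|
  set T : S → ℝ := fun s ↦ tvDist ((P s).map φ) (Pb (φ s)).toMeasure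
  have hg : Measurable g := hdmeas.comp (measurable_inl.prodMk (measurable_inr.comp hφ))
  have hg_le (s : S) : ‖g s‖ ≤ 1 := (abs_of_nonneg (hd01 _ _).1).trans_le (hd01 _ _).2
  have hR_int : Integrable R ξ := by
    obtain ⟨C, hC⟩ := hrbdd
    have hr_int : Integrable r ξ := .of_bound hrmeas.aestronglyMeasurable C (ae_of_all ξ hC)
    exact (hr_int.sub ((Integrable.of_finite (μ := ξ.map φ)).comp_measurable hφ)).abs
  have hT : Measurable T :=
    measurable_tvDist_s7 ((Measure.measurable_map φ hφ).comp P.measurable)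
      ((Measurable.of_discrete (f := fun x : Sb ↦ (Pb x).toMeasure)).comp hφ)
  have hT_int : Integrable T ξ :=
    .of_bound hT.aestronglyMeasurable 1 (ae_of_all ξ fun s ↦
        (abs_of_nonneg (tvDist_nonneg _ _)).trans_le (tvDist_le_one _ _))
  have hpt (s : S) : g s ≤ (1 - γ) * R s + γ * (∫ t, g t ∂P s + Kb * T s) :=
    (hfix s).trans (by
      gcongr
      exact wassDual_map_inl_map_inr_le (fun x y ↦ (hd01 x y).1) hφ (P s) _
        (.of_bound hg.aestronglyMeasurable 1 (ae_of_all _ hg_le)) hdK)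
  rw [mul_assoc γ, ← integral_const_mul]
  exact hP.integral_le_of_le_discounted hγ1 hg hg_le hR_int (hT_int.const_mul Kb) hpt

/-- Bisimulation bound for the reward-based bisimulation pseudometric: if the pseudometric `d`
on the disjoint union of the ground and latent state spaces satisfies the reward fixed-point
inequality at pairs `(s, φ(s))` and is bounded by `K̄` on the latent part, then the expected
distance between a state and its embedding under the stationary distribution `ξ` is at most
`L_R + γ·K̄·L_P/(1-γ)`. -/
theorem bisimulation_bound_rewards
    {S : Type*} [MeasurableSpace S]
    {Sb : Type*} [Fintype Sb] [Nonempty Sb] [MeasurableSpace Sb] [DiscreteMeasurableSpace Sb]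
    (P : Kernel S S) [IsMarkovKernel P]
    (Pb : Sb → PMF Sb)
    (φ : S → Sb) (hφ : Measurable φ)
    (ξ : Measure S) [IsProbabilityMeasure ξ]
    (hinv : ∀ A : Set S, MeasurableSet A → ξ A = ∫⁻ s, P s A ∂ξ)
    (γ : ℝ) (hγ0 : 0 ≤ γ) (hγ1 : γ < 1)
    (d : (S ⊕ Sb) → (S ⊕ Sb) → ℝ)
    (hdmeas : Measurable (Function.uncurry d))
    (hd01 : ∀ x y, d x y ∈ Set.Icc (0 : ℝ) 1)
    (hdrefl : ∀ x, d x x = 0)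
    (hdsymm : ∀ x y, d x y = d y x)
    (hdtri : ∀ x y z, d x z ≤ d x y + d y z)
    (r : S → ℝ) (hrmeas : Measurable r) (hrbdd : ∃ C, ∀ s, |r s| ≤ C)
    (rb : Sb → ℝ)
    (Kb : ℝ) (hKb : 0 ≤ Kb)
    (hfix : ∀ s : S,
      d (Sum.inl s) (Sum.inr (φ s)) ≤
        (1 - γ) * |r s - rb (φ s)| +
          γ * wassDual d (((P s).map Sum.inl : Measure (S ⊕ Sb)))
            (((Pb (φ s)).toMeasure.map Sum.inr : Measure (S ⊕ Sb))))
    (hdK : ∀ x y : Sb, d (Sum.inr x) (Sum.inr y) ≤ Kb) :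
    ∫ s, d (Sum.inl s) (Sum.inr (φ s)) ∂ξ ≤
      (∫ s, |r s - rb (φ s)| ∂ξ) +
        γ * Kb * (∫ s, tvDist ((P s).map φ) ((Pb (φ s)).toMeasure) ∂ξ) / (1 - γ) :=
  bisimulation_bound_rewards_general P Pb φ hφ ξ hinv γ hγ0 hγ1 d hdmeas hd01 r hrmeas hrbdd rb Kb
    hfix hdK
end

section
/- Let d̄ : S̄ × S̄ → ℝ be a nonnegative function and, for probability measures μ, ν on S̄, define W_d̄(μ, ν) = sup { |Σ_{x̄} f(x̄) μ({x̄}) − Σ_{x̄} f(x̄) ν({x̄})| : f : S̄ → ℝ with |f(x̄) − f(ȳ)| ≤ d̄(x̄,ȳ) for all x̄, ȳ }. Then ∫ W_d̄(φ∗P(·|s), P̄(φ(s))) dξ(s) ≤ ∫ ( ∫ W_d̄(δ_{φ(s')}, P̄(φ(s))) P(ds'|s) ) dξ(s), where δ_{x̄} denotes the Dirac measure at x̄. In particular, the local transition loss L_P is bounded above by the expected Wasserstein distance between the Dirac at the embedded successor state and the latent transition distribution. -/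
/-!
For a single test function `f`, the gap `|E_{φ∗P(·|s)} f - E_ν f|` is the absolute value
of `∫ (f (φ s') - E_ν f) dP(s'|s)`, hence at most `∫ |f (φ s') - E_ν f| dP(s'|s)`, and each
integrand is one of the gaps in the supremum defining `W_d̄(δ_{φ(s')}, ν)`. Taking the
supremum over `f` gives the inequality for every `s`; integrating against `ξ` finishes.
-/

open MeasureTheory ProbabilityTheory

/-- Dual Wasserstein distance between two measures on a finite type `Sb` with respect to a
cost function `db`, expressed through sums over singletons. -/
noncomputable def wassFin {Sb : Type*} [Fintype Sb] [MeasurableSpace Sb]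
    (db : Sb → Sb → ℝ) (μ ν : Measure Sb) : ℝ :=
  ⨆ f : {f : Sb → ℝ // ∀ x y, |f x - f y| ≤ db x y},
    |(∑ x, f.1 x * (μ {x}).toReal) - ∑ x, f.1 x * (ν {x}).toReal|

section Kernel

variable {α β E : Type*} [MeasurableSpace α] [MeasurableSpace β]
  [NormedAddCommGroup E] [NormedSpace ℝ E]

lemma integrable_integral_kernel_of_norm_le {κ : Kernel α β} [IsMarkovKernel κ]
    {μ : Measure α} [IsFiniteMeasure μ] {f : α → β → E}
    (hf : StronglyMeasurable (Function.uncurry f)) (C : ℝ) (hC : ∀ x y, ‖f x y‖ ≤ C) :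
    Integrable (fun x => ∫ y, f x y ∂κ x) μ := by
  refine .of_bound hf.integral_kernel_prod_right.aestronglyMeasurable C (ae_of_all _ fun x => ?_)
  simpa using norm_integral_le_of_norm_le_const (μ := κ x) (ae_of_all _ (hC x))

end Kernel

section Finite

variable {Sb : Type*} [Fintype Sb] [MeasurableSpace Sb] [MeasurableSingletonClass Sb]

lemma sum_mul_measureReal_singleton (f : Sb → ℝ) (μ : Measure Sb) [IsFiniteMeasure μ] :
    ∑ x, f x * μ.real {x} = ∫ x, f x ∂μ := by
  simp [integral_fintype .of_finite, mul_comm]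

lemma sum_mul_measureReal_dirac_singleton (f : Sb → ℝ) (a : Sb) :
    ∑ x, f x * (Measure.dirac a).real {x} = f a := by
  rw [sum_mul_measureReal_singleton, integral_dirac]

/-- The right-hand side is the transport cost of the product coupling `μ ⊗ ν`. -/
lemma abs_sum_mul_sub_sum_mul_le {db : Sb → Sb → ℝ} {f : Sb → ℝ}
    (hf : ∀ x y, |f x - f y| ≤ db x y) (μ ν : Measure Sb)
    [IsProbabilityMeasure μ] [IsProbabilityMeasure ν] :
    |∑ x, f x * μ.real {x} - ∑ y, f y * ν.real {y}| ≤
      ∑ x, ∑ y, db x y * (μ.real {x} * ν.real {y}) := by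
  have hcoupling : ∑ x, f x * μ.real {x} - ∑ y, f y * ν.real {y} =
      ∑ x, ∑ y, (f x - f y) * (μ.real {x} * ν.real {y}) := by
    calc ∑ x, f x * μ.real {x} - ∑ y, f y * ν.real {y}
        = (∑ x, f x * μ.real {x}) * ∑ y, ν.real {y} -
            (∑ x, μ.real {x}) * ∑ y, f y * ν.real {y} := by
          simp
      _ = ∑ x, ∑ y, (f x - f y) * (μ.real {x} * ν.real {y}) := by
          simp only [Finset.sum_mul_sum, ← Finset.sum_sub_distrib]
          exact Finset.sum_congr rfl fun x _ => Finset.sum_congr rfl fun y _ => by ring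
  rw [hcoupling]
  refine (Finset.abs_sum_le_sum_abs _ _).trans (Finset.sum_le_sum fun x _ => ?_)
  refine (Finset.abs_sum_le_sum_abs _ _).trans (Finset.sum_le_sum fun y _ => ?_)
  have hprod : 0 ≤ μ.real {x} * ν.real {y} := mul_nonneg measureReal_nonneg measureReal_nonneg
  rw [abs_mul, abs_of_nonneg hprod]
  exact mul_le_mul_of_nonneg_right (hf x y) hprod

variable (db : Sb → Sb → ℝ)

lemma wassFin_bddAbove (μ ν : Measure Sb) [IsProbabilityMeasure μ] [IsProbabilityMeasure ν] :
    BddAbove (Set.range fun f : {f : Sb → ℝ // ∀ x y, |f x - f y| ≤ db x y} =>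
      |∑ x, f.1 x * (μ {x}).toReal - ∑ x, f.1 x * (ν {x}).toReal|) :=
  ⟨_, Set.forall_mem_range.2 fun f => abs_sum_mul_sub_sum_mul_le f.2 μ ν⟩

lemma abs_sum_mul_sub_le_wassFin {f : Sb → ℝ} (hf : ∀ x y, |f x - f y| ≤ db x y)
    (μ ν : Measure Sb) [IsProbabilityMeasure μ] [IsProbabilityMeasure ν] :
    |∑ x, f x * μ.real {x} - ∑ x, f x * ν.real {x}| ≤ wassFin db μ ν :=
  le_ciSup (wassFin_bddAbove db μ ν) ⟨f, hf⟩

variable {db}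

lemma wassFin_nonneg (hdb : ∀ x y, 0 ≤ db x y) (μ ν : Measure Sb)
    [IsProbabilityMeasure μ] [IsProbabilityMeasure ν] :
    0 ≤ wassFin db μ ν :=
  (abs_nonneg _).trans (abs_sum_mul_sub_le_wassFin db (f := 0) (by simpa using hdb) μ ν)

/-- Convexity of `W_d̄(·, ν)`, `μ` being the mixture `∫ δ_x dμ(x)`. -/
lemma wassFin_le_integral_wassFin_dirac (hdb : ∀ x y, 0 ≤ db x y) (μ ν : Measure Sb)
    [IsProbabilityMeasure μ] [IsProbabilityMeasure ν] :
    wassFin db μ ν ≤ ∫ x, wassFin db (Measure.dirac x) ν ∂μ := by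
  have : Nonempty {f : Sb → ℝ // ∀ x y, |f x - f y| ≤ db x y} :=
    ⟨⟨0, by simpa using hdb⟩⟩
  refine ciSup_le fun ⟨f, hf⟩ => ?_
  set c := ∑ x, f x * ν.real {x}
  calc |∑ x, f x * μ.real {x} - c| = |∫ x, (f x - c) ∂μ| := by
        rw [sum_mul_measureReal_singleton, integral_sub .of_finite .of_finite, integral_const]
        simp
    _ ≤ ∫ x, |f x - c| ∂μ := abs_integral_le_integral_abs
    _ ≤ ∫ x, wassFin db (Measure.dirac x) ν ∂μ := by
        refine integral_mono .of_finite .of_finite fun x => ?_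
        simpa only [sum_mul_measureReal_dirac_singleton] using
          abs_sum_mul_sub_le_wassFin db hf (Measure.dirac x) ν

end Finite

theorem transition_loss_le_sample_upper_bound_general
    {S : Type*} [MeasurableSpace S]
    {Sb : Type*} [Fintype Sb] [MeasurableSpace Sb] [DiscreteMeasurableSpace Sb]
    (P : Kernel S S) [IsMarkovKernel P]
    (Pb : Sb → PMF Sb)
    (φ : S → Sb) (hφ : Measurable φ)
    (ξ : Measure S) [IsProbabilityMeasure ξ]
    (db : Sb → Sb → ℝ) (hdb : ∀ x y, 0 ≤ db x y) :
    ∫ s, wassFin db ((P s).map φ) ((Pb (φ s)).toMeasure) ∂ξ ≤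
      ∫ s, (∫ s', wassFin db (Measure.dirac (φ s')) ((Pb (φ s)).toMeasure) ∂(P s)) ∂ξ := by
  set W : Sb → Sb → ℝ := fun b a => wassFin db (Measure.dirac a) (Pb b).toMeasure
  have hW_meas : StronglyMeasurable (Function.uncurry fun s s' => W (φ s) (φ s')) :=
    ((Measurable.of_discrete (f := Function.uncurry W)).comp
      (hφ.prodMap hφ)).stronglyMeasurable
  obtain ⟨C, hC⟩ := (Set.finite_range fun p : Sb × Sb => ‖W p.1 p.2‖).bddAbove
  have hW_int : Integrable (fun s => ∫ s', W (φ s) (φ s') ∂P s) ξ :=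
    integrable_integral_kernel_of_norm_le hW_meas C fun s s' => hC ⟨(φ s, φ s'), rfl⟩
  have (s : S) : IsProbabilityMeasure ((P s).map φ) :=
    Measure.isProbabilityMeasure_map hφ.aemeasurable
  refine integral_mono_of_nonneg (ae_of_all _ fun s => ?_) hW_int (ae_of_all _ fun s => ?_)
  · exact wassFin_nonneg hdb _ _
  · calc wassFin db ((P s).map φ) (Pb (φ s)).toMeasure
        ≤ ∫ b, W (φ s) b ∂(P s).map φ := wassFin_le_integral_wassFin_dirac hdb _ _
      _ = ∫ s', W (φ s) (φ s') ∂P s :=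
        integral_map hφ.aemeasurable Measurable.of_discrete.aestronglyMeasurable

/-- The local transition loss (with respect to any nonnegative cost `db` on the latent space)
is bounded above by the expected Wasserstein distance between the Dirac measure at the
embedded successor state and the latent transition distribution. -/
theorem transition_loss_le_sample_upper_bound
    {S : Type*} [MeasurableSpace S]
    {Sb : Type*} [Fintype Sb] [Nonempty Sb] [MeasurableSpace Sb] [DiscreteMeasurableSpace Sb]
    (P : Kernel S S) [IsMarkovKernel P]
    (Pb : Sb → PMF Sb)
    (φ : S → Sb) (hφ : Measurable φ)
    (ξ : Measure S) [IsProbabilityMeasure ξ]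
    (hinv : ∀ A : Set S, MeasurableSet A → ξ A = ∫⁻ s, P s A ∂ξ)
    (db : Sb → Sb → ℝ) (hdb : ∀ x y, 0 ≤ db x y) :
    ∫ s, wassFin db ((P s).map φ) ((Pb (φ s)).toMeasure) ∂ξ ≤
      ∫ s, (∫ s', wassFin db (Measure.dirac (φ s')) ((Pb (φ s)).toMeasure) ∂(P s)) ∂ξ :=
  transition_loss_le_sample_upper_bound_general P Pb φ hφ ξ db hdb
end

section
/- Assume rewards are bounded by one half, i.e. |r(s)| ≤ 1/2 for all s ∈ S and |r̄(x̄)| ≤ 1/2 for all x̄ ∈ S̄, and that V̄ is K-Lipschitz-valued for some K ≥ 0. Define the empirical losses L̂_R = (1/T) Σ_{t<T} |r(S_t) − r̄(φ(S_t))| and L̂_P = (1/T) Σ_{t<T} (1 − P̄(φ(S_t))(φ(S'_t))). Let ε, δ ∈ (0,1). If T ≥ ⌈−log(δ/4)·(1+γK)²/(2ε²(1−γ)²)⌉, then with probability at least 1−δ: ∫ |V(s) − V̄(φ(s))| dξ(s) ≤ (L̂_R + γ K L̂_P)/(1−γ) + ε. -/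
open MeasureTheory ProbabilityTheory

/-!
Unfolding both Bellman equations once gives, for `s' ~ P(·|s)`,
`|V s - V̄ (φ s)| ≤ |r s - r̄ (φ s)| + γ K 𝔼[1 - P̄ (φ s) (φ s')] + γ 𝔼|V s' - V̄ (φ s')|`,
where the middle term bounds the latent mismatch of `V̄` by coupling `φ∗P(·|s)` and
`P̄ (φ s)` independently. Integrating against the invariant `ξ` turns the last term into `γ`
times the left-hand side, so `(1 - γ) 𝔼_ξ |V - V̄ ∘ φ|` is at most the `ξ ⊗ P`-mean `m` of the
per-sample loss. The loss takes values in `[0, 1 + γ K]`, so by Hoeffding's inequality its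
empirical mean over the `T` independent samples drops below `m - ε (1 - γ)` with probability
at most `exp (-2 T ε² (1 - γ)² / (1 + γ K)²) ≤ δ / 4`.
-/

open Finset

theorem abs_sum_mul_sub_sum_mul_le_s15 {ι : Type*} [Fintype ι] {μ ν V : ι → ℝ} {K : ℝ}
    (hμ : ∀ x, 0 ≤ μ x) (hν : ∀ y, 0 ≤ ν y) (hμ1 : ∑ x, μ x = 1) (hν1 : ∑ y, ν y = 1)
    (hV : ∀ x y, |V x - V y| ≤ K) :
    |∑ x, μ x * V x - ∑ y, ν y * V y| ≤ K * (1 - ∑ x, μ x * ν x) := by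
  classical
  -- Couple `μ` and `ν` independently: only the off-diagonal pairs `x ≠ y` contribute.
  have hcoupling : ∑ x, μ x * V x - ∑ y, ν y * V y = ∑ x, ∑ y, μ x * ν y * (V x - V y) := by
    calc ∑ x, μ x * V x - ∑ y, ν y * V y
        = (∑ x, μ x * V x) * (∑ y, ν y) - (∑ x, μ x) * ∑ y, ν y * V y := by rw [hμ1, hν1]; ring
      _ = _ := by
        rw [sum_mul_sum, sum_mul_sum, ← sum_sub_distrib]
        exact sum_congr rfl fun x _ => by
          rw [← sum_sub_distrib]; exact sum_congr rfl fun y _ => by ring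
  have hV' : ∀ x y, |V x - V y| ≤ K * (1 - if x = y then 1 else 0) := by
    intro x y
    split_ifs with h
    · simp [h]
    · simpa using hV x y
  calc |∑ x, μ x * V x - ∑ y, ν y * V y|
      ≤ ∑ x, ∑ y, μ x * ν y * |V x - V y| := by
        rw [hcoupling]
        refine (abs_sum_le_sum_abs _ _).trans (sum_le_sum fun x _ => ?_)
        refine (abs_sum_le_sum_abs _ _).trans (sum_le_sum fun y _ => ?_)
        rw [abs_mul, abs_of_nonneg (mul_nonneg (hμ x) (hν y))]
    _ ≤ ∑ x, ∑ y, μ x * ν y * (K * (1 - if x = y then 1 else 0)) := by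
        gcongr with x _ y _
        · exact mul_nonneg (hμ x) (hν y)
        · exact hV' x y
    _ = K * (1 - ∑ x, μ x * ν x) := by
        simp only [mul_sub, mul_one, mul_ite, mul_zero, sum_sub_distrib, sum_ite_eq]
        simp only [← sum_mul, ← mul_sum, hμ1, hν1, mem_univ, if_true]
        ring

theorem PMF.sum_toReal_eq_one {α : Type*} [Fintype α] (p : PMF α) : ∑ a, (p a).toReal = 1 := by
  rw [← ENNReal.toReal_sum fun a _ => p.apply_ne_top a,
    ← tsum_fintype (L := .unconditional _), p.tsum_coe, ENNReal.toReal_one]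

theorem abs_integral_comp_sub_sum_le {S Sb : Type*} [MeasurableSpace S] [Fintype Sb]
    [MeasurableSpace Sb] [DiscreteMeasurableSpace Sb] (ρ : Measure S) [IsProbabilityMeasure ρ]
    {φ : S → Sb} (hφ : Measurable φ) (ν : PMF Sb) {V : Sb → ℝ} {K : ℝ}
    (hV : ∀ x y, |V x - V y| ≤ K) :
    |∫ s, V (φ s) ∂ρ - ∑ y, (ν y).toReal * V y| ≤ K * ∫ s, (1 - (ν (φ s)).toReal) ∂ρ := by
  have := Measure.isProbabilityMeasure_map (μ := ρ) hφ.aemeasurable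
  have hpush (g : Sb → ℝ) : ∫ s, g (φ s) ∂ρ = ∑ y, (ρ.map φ).real {y} * g y := by
    rw [← integral_map hφ.aemeasurable (measurable_of_countable g).aestronglyMeasurable,
      integral_fintype .of_finite]
    simp
  have hsum : ∑ y, (ρ.map φ).real {y} = 1 := by simp
  rw [hpush V, hpush (fun y => 1 - (ν y).toReal)]
  simpa [mul_sub, sum_sub_distrib, hsum] using
    abs_sum_mul_sub_sum_mul_le_s15 (fun _ => measureReal_nonneg) (fun _ => ENNReal.toReal_nonneg)
      hsum ν.sum_toReal_eq_one hV

lemma MeasureTheory.Measure.integrable_integral_compProd {α β : Type*} [MeasurableSpace α]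
    [MeasurableSpace β] {μ : Measure α} [SFinite μ] {κ : Kernel α β} [IsSFiniteKernel κ]
    {f : α × β → ℝ} (hf : Integrable f (μ ⊗ₘ κ)) : Integrable (fun a => ∫ b, f (a, b) ∂κ a) μ := by
  rw [Measure.compProd] at hf
  simpa using hf.integral_compProd

lemma MeasureTheory.Measure.snd_compProd_of_invariant {S : Type*} [MeasurableSpace S]
    {ξ : Measure S} [SFinite ξ] {P : Kernel S S} [IsSFiniteKernel P]
    (hinv : ∀ A : Set S, MeasurableSet A → ξ A = ∫⁻ s, P s A ∂ξ) : (ξ ⊗ₘ P).snd = ξ := by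
  ext A hA
  rw [Measure.snd_compProd, Measure.bind_apply hA P.aemeasurable, hinv A hA]

lemma integrable_of_exists_abs_le {α : Type*} [MeasurableSpace α] {μ : Measure α}
    [IsFiniteMeasure μ] {f : α → ℝ} (hf : Measurable f) (hbdd : ∃ C, ∀ a, |f a| ≤ C) :
    Integrable f μ :=
  let ⟨C, hC⟩ := hbdd
  .of_bound hf.aestronglyMeasurable C (ae_of_all _ hC)

section ValueDifference

variable {S Sb : Type*}

/-- The summand of `L̂_R + γ K L̂_P` at a sample pair `q = (S_t, S'_t)`. -/
def sampleLoss (r : S → ℝ) (rb : Sb → ℝ) (Pb : Sb → PMF Sb) (φ : S → Sb) (γ K : ℝ)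
    (q : S × S) : ℝ :=
  |r q.1 - rb (φ q.1)| + γ * K * (1 - (Pb (φ q.1) (φ q.2)).toReal)

variable {r : S → ℝ} {rb : Sb → ℝ} {Pb : Sb → PMF Sb} {φ : S → Sb} {γ K : ℝ}

lemma one_div_mul_sum_sampleLoss {T : ℕ} (q : Fin T → S × S) :
    1 / T * ∑ t, sampleLoss r rb Pb φ γ K (q t) =
      1 / T * ∑ t, |r (q t).1 - rb (φ (q t).1)| +
        γ * K * (1 / T * ∑ t, (1 - (Pb (φ (q t).1) (φ (q t).2)).toReal)) := by
  simp only [sampleLoss, sum_add_distrib, ← mul_sum]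
  ring

lemma sampleLoss_mem_Icc (hr : ∀ s, |r s| ≤ 1 / 2) (hrb : ∀ x, |rb x| ≤ 1 / 2)
    (hγK : 0 ≤ γ * K) (q : S × S) : sampleLoss r rb Pb φ γ K q ∈ Set.Icc 0 (1 + γ * K) := by
  have hν : (Pb (φ q.1) (φ q.2)).toReal ≤ 1 := ENNReal.toReal_le_of_le_ofReal zero_le_one
    (by simpa using PMF.coe_le_one _ _)
  have hν0 : 0 ≤ (Pb (φ q.1) (φ q.2)).toReal := ENNReal.toReal_nonneg
  have hreward : |r q.1 - rb (φ q.1)| ≤ 1 :=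
    (abs_sub _ _).trans (by linarith [hr q.1, hrb (φ q.1)])
  unfold sampleLoss
  constructor <;> nlinarith [abs_nonneg (r q.1 - rb (φ q.1))]

variable [MeasurableSpace S] [Fintype Sb] [MeasurableSpace Sb] [DiscreteMeasurableSpace Sb]

lemma measurable_sampleLoss (hr : Measurable r) (hφ : Measurable φ) :
    Measurable (sampleLoss r rb Pb φ γ K) := by
  have hν : Measurable fun q : Sb × Sb => (Pb q.1 q.2).toReal := measurable_of_countable _
  have hrb : Measurable rb := measurable_of_countable _
  unfold sampleLoss
  fun_prop

lemma integrable_comp_of_finite {ρ : Measure S} [IsFiniteMeasure ρ] (hφ : Measurable φ)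
    (g : Sb → ℝ) : Integrable (fun s => g (φ s)) ρ :=
  (Integrable.of_finite (μ := ρ.map φ)).comp_measurable hφ

variable {P : Kernel S S} [IsMarkovKernel P] {V : S → ℝ} {Vb : Sb → ℝ}

lemma abs_sub_le_integral_sampleLoss (hφ : Measurable φ) (hγ : 0 ≤ γ)
    (hV : Measurable V) (hVbdd : ∃ C, ∀ s, |V s| ≤ C)
    (hVbellman : ∀ s, V s = r s + γ * ∫ s', V s' ∂(P s))
    (hVbbellman : ∀ x, Vb x = rb x + γ * ∑ y, ((Pb x) y).toReal * Vb y)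
    (hVbLip : ∀ x y, |Vb x - Vb y| ≤ K) (s : S) :
    |V s - Vb (φ s)| ≤
      ∫ s', (sampleLoss r rb Pb φ γ K (s, s') + γ * |V s' - Vb (φ s')|) ∂(P s) := by
  have hVint : Integrable V (P s) := integrable_of_exists_abs_le hV hVbdd
  have hcomp (g : Sb → ℝ) : Integrable (fun s' => g (φ s')) (P s) := integrable_comp_of_finite hφ g
  have hΔint : Integrable (fun s' => |V s' - Vb (φ s')|) (P s) := (hVint.sub (hcomp Vb)).abs
  have hgap : V s - Vb (φ s) = r s - rb (φ s) + γ * (∫ s', (V s' - Vb (φ s')) ∂(P s) +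
      (∫ s', Vb (φ s') ∂(P s) - ∑ y, (Pb (φ s) y).toReal * Vb y)) := by
    rw [integral_sub hVint (hcomp Vb), hVbellman s, hVbbellman (φ s)]
    ring
  have hνint : Integrable (fun s' => 1 - (Pb (φ s) (φ s')).toReal) (P s) :=
    hcomp fun y => 1 - (Pb (φ s) y).toReal
  have hlossint : Integrable (fun s' => |r s - rb (φ s)| +
      γ * K * (1 - (Pb (φ s) (φ s')).toReal)) (P s) :=
    (integrable_const _).add (hνint.const_mul _)
  calc |V s - Vb (φ s)|
      ≤ |r s - rb (φ s)| + γ * (∫ s', |V s' - Vb (φ s')| ∂(P s) +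
          K * ∫ s', (1 - (Pb (φ s) (φ s')).toReal) ∂(P s)) := by
        rw [hgap]
        refine (abs_add_le _ _).trans ?_
        rw [abs_mul, abs_of_nonneg hγ]
        gcongr
        exact (abs_add_le _ _).trans (add_le_add abs_integral_le_integral_abs
          (abs_integral_comp_sub_sum_le (P s) hφ (Pb (φ s)) hVbLip))
    _ = _ := by
        simp only [sampleLoss]
        rw [integral_add hlossint (hΔint.const_mul γ), integral_add (integrable_const _)
          (hνint.const_mul _), integral_const_mul, integral_const_mul, integral_const]
        simp only [probReal_univ, one_smul]
        ring

lemma one_sub_mul_integral_abs_sub_le {ξ : Measure S} [IsProbabilityMeasure ξ]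
    (hinv : ∀ A : Set S, MeasurableSet A → ξ A = ∫⁻ s, P s A ∂ξ)
    (hloss : Integrable (sampleLoss r rb Pb φ γ K) (ξ ⊗ₘ P)) (hφ : Measurable φ) (hγ : 0 ≤ γ)
    (hV : Measurable V) (hVbdd : ∃ C, ∀ s, |V s| ≤ C)
    (hVbellman : ∀ s, V s = r s + γ * ∫ s', V s' ∂(P s))
    (hVbbellman : ∀ x, Vb x = rb x + γ * ∑ y, ((Pb x) y).toReal * Vb y)
    (hVbLip : ∀ x y, |Vb x - Vb y| ≤ K) :
    (1 - γ) * ∫ s, |V s - Vb (φ s)| ∂ξ ≤ ∫ q, sampleLoss r rb Pb φ γ K q ∂(ξ ⊗ₘ P) := by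
  have hsnd := Measure.snd_compProd_of_invariant hinv
  have hΔ : Integrable (fun s => |V s - Vb (φ s)|) ξ :=
    ((integrable_of_exists_abs_le hV hVbdd).sub (integrable_comp_of_finite hφ Vb)).abs
  have hΔ' : Integrable (fun s => |V s - Vb (φ s)|) (ξ ⊗ₘ P).snd := by rwa [hsnd]
  have hΔsnd : Integrable (fun q : S × S => |V q.2 - Vb (φ q.2)|) (ξ ⊗ₘ P) :=
    hΔ'.comp_measurable measurable_snd
  have hΔmean : ∫ q, |V q.2 - Vb (φ q.2)| ∂(ξ ⊗ₘ P) = ∫ s, |V s - Vb (φ s)| ∂ξ := by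
    rw [← integral_map measurable_snd.aemeasurable hΔ'.aestronglyMeasurable]
    exact congrArg (fun μ => ∫ s, |V s - Vb (φ s)| ∂μ) hsnd
  have hG := hloss.add (hΔsnd.const_mul γ)
  have hstep : ∫ s, |V s - Vb (φ s)| ∂ξ ≤
      ∫ q, sampleLoss r rb Pb φ γ K q ∂(ξ ⊗ₘ P) + γ * ∫ s, |V s - Vb (φ s)| ∂ξ := by
    calc ∫ s, |V s - Vb (φ s)| ∂ξ
        ≤ ∫ s, ∫ s', (sampleLoss r rb Pb φ γ K (s, s') + γ * |V s' - Vb (φ s')|) ∂(P s) ∂ξ :=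
          integral_mono hΔ (Measure.integrable_integral_compProd hG)
            (abs_sub_le_integral_sampleLoss hφ hγ hV hVbdd hVbellman hVbbellman hVbLip)
      _ = ∫ q, (sampleLoss r rb Pb φ γ K q + γ * |V q.2 - Vb (φ q.2)|) ∂(ξ ⊗ₘ P) :=
          (Measure.integral_compProd hG).symm
      _ = _ := by
          rw [integral_add hloss (hΔsnd.const_mul γ), integral_const_mul, hΔmean]
  linarith

end ValueDifference

theorem measureReal_le_sum_integral_sub_le {Ω α : Type*} [MeasurableSpace Ω] [MeasurableSpace α]
    {μ : Measure Ω} [IsProbabilityMeasure μ] {ν : Measure α} {T : ℕ} {Z : Fin T → Ω → α}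
    (hZ : ∀ t, Measurable (Z t)) (hindep : iIndepFun Z μ) (hlaw : ∀ t, μ.map (Z t) = ν)
    {f : α → ℝ} (hf : Measurable f) {a b : ℝ} (hfab : ∀ x, f x ∈ Set.Icc a b) {ε : ℝ}
    (hε : 0 ≤ ε) :
    μ.real {ω | T * ε ≤ ∑ t, (∫ x, f x ∂ν - f (Z t ω))} ≤
      Real.exp (-2 * T * ε ^ 2 / (b - a) ^ 2) := by
  set m := ∫ x, f x ∂ν
  have hsubG (t : Fin T) :
      HasSubgaussianMGF (fun ω => m - f (Z t ω)) ((‖b - a‖₊ / 2) ^ 2) μ := by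
    have hfZ : Measurable fun ω => f (Z t ω) := hf.comp (hZ t)
    have hmean : ∫ ω, (m - f (Z t ω)) ∂μ = 0 := by
      have hlaw_t : ∫ ω, f (Z t ω) ∂μ = m := by
        rw [← integral_map (hZ t).aemeasurable hf.aestronglyMeasurable, hlaw t]
      rw [integral_sub (integrable_const m)
        (.of_mem_Icc a b hfZ.aemeasurable (ae_of_all _ fun ω => hfab _)), hlaw_t]
      simp
    have h := hasSubgaussianMGF_of_mem_Icc_of_integral_eq_zero (a := m - b) (b := m - a)
      (hfZ.const_sub m).aemeasurable
      (ae_of_all _ fun ω => ⟨by linarith [(hfab (Z t ω)).2], by linarith [(hfab (Z t ω)).1]⟩)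
      hmean
    rwa [sub_sub_sub_cancel_left] at h
  have h := HasSubgaussianMGF.measure_sum_ge_le_of_iIndepFun
    (hindep.comp (fun _ x => m - f x) fun _ => hf.const_sub m) (s := Finset.univ)
    (fun t _ => hsubG t) (by positivity : 0 ≤ (T : ℝ) * ε)
  refine h.trans_eq (congrArg Real.exp ?_)
  simp only [Finset.sum_const, Finset.card_univ, Fintype.card_fin,
    nsmul_eq_mul, NNReal.coe_mul, NNReal.coe_natCast, NNReal.coe_pow, NNReal.coe_div,
    coe_nnnorm, Real.norm_eq_abs, NNReal.coe_ofNat, div_pow, sq_abs]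
  rcases eq_or_ne (T : ℝ) 0 with hT | hT
  · simp [hT]
  rcases eq_or_ne (b - a) 0 with hab | hab
  · simp [hab]
  field_simp

theorem exp_neg_two_mul_sq_div_le_of_ceil_le {δ ε b : ℝ} {T : ℕ} (hδ : 0 < δ) (hε : 0 < ε)
    (hb : 0 < b) (hT : ⌈-Real.log δ * b ^ 2 / (2 * ε ^ 2)⌉₊ ≤ T) :
    Real.exp (-2 * T * ε ^ 2 / b ^ 2) ≤ δ := by
  have h : -Real.log δ * b ^ 2 / (2 * ε ^ 2) ≤ T := (Nat.le_ceil _).trans (Nat.cast_le.2 hT)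
  rw [div_le_iff₀ (by positivity)] at h
  calc Real.exp (-2 * T * ε ^ 2 / b ^ 2) ≤ Real.exp (Real.log δ) := by
        rw [Real.exp_le_exp, div_le_iff₀ (by positivity)]
        linarith
    _ = δ := Real.exp_log hδ

theorem lt_one_div_mul_sum_add_of_sum_sub_lt {T : ℕ} {x : Fin T → ℝ} {m ε : ℝ}
    (h : ∑ t, (m - x t) < T * ε) : m < 1 / T * ∑ t, x t + ε := by
  rw [sum_sub_distrib, sum_const, card_univ, Fintype.card_fin, nsmul_eq_mul] at h
  have hT : (0 : ℝ) < T := by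
    rcases Nat.eq_zero_or_pos T with rfl | hT
    · simp at h
    · exact_mod_cast hT
  rw [one_div, inv_mul_eq_div, ← sub_lt_iff_lt_add, lt_div_iff₀ hT]
  linarith

theorem ofReal_one_sub_le_measure_of_compl_subset {Ω : Type*} [MeasurableSpace Ω]
    {μ : Measure Ω} [IsProbabilityMeasure μ] {A B : Set Ω} {p : ℝ} (hA : μ.real A ≤ p)
    (hAB : Aᶜ ⊆ B) : ENNReal.ofReal (1 - p) ≤ μ B := by
  have hp : 0 ≤ p := measureReal_nonneg.trans hA
  have hA' : μ A ≤ ENNReal.ofReal p := by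
    rw [← ofReal_measureReal]
    exact ENNReal.ofReal_le_ofReal hA
  rw [ENNReal.ofReal_sub _ hp, ENNReal.ofReal_one, tsub_le_iff_right]
  calc 1 = μ Set.univ := measure_univ.symm
    _ ≤ μ A + μ Aᶜ := measure_univ_le_add_compl A
    _ ≤ ENNReal.ofReal p + μ B := add_le_add hA' (measure_mono hAB)
    _ = μ B + ENNReal.ofReal p := add_comm _ _

theorem pac_value_difference_return_general
    {S : Type*} [MeasurableSpace S]
    {Sb : Type*} [Fintype Sb] [MeasurableSpace Sb] [DiscreteMeasurableSpace Sb]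
    (P : Kernel S S) [IsMarkovKernel P]
    (Pb : Sb → PMF Sb)
    (φ : S → Sb) (hφ : Measurable φ)
    (ξ : Measure S) [IsProbabilityMeasure ξ]
    (hinv : ∀ A : Set S, MeasurableSet A → ξ A = ∫⁻ s, P s A ∂ξ)
    (γ : ℝ) (hγ0 : 0 ≤ γ) (hγ1 : γ < 1)
    (r : S → ℝ) (hrmeas : Measurable r) (hrbdd : ∀ s, |r s| ≤ 1 / 2)
    (rb : Sb → ℝ) (hrbbdd : ∀ x, |rb x| ≤ 1 / 2)
    (V : S → ℝ) (hVmeas : Measurable V) (hVbdd : ∃ C, ∀ s, |V s| ≤ C)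
    (hVbellman : ∀ s, V s = r s + γ * ∫ s', V s' ∂(P s))
    (Vb : Sb → ℝ)
    (hVbbellman : ∀ x, Vb x = rb x + γ * ∑ y, ((Pb x) y).toReal * Vb y)
    (K : ℝ) (hK : 0 ≤ K) (hVbLip : ∀ x y, |Vb x - Vb y| ≤ K)
    (ε δ : ℝ) (hε : ε ∈ Set.Ioo (0 : ℝ) 1) (hδ : δ ∈ Set.Ioo (0 : ℝ) 1)
    {Ω : Type*} [MeasurableSpace Ω] (Pr : Measure Ω) [IsProbabilityMeasure Pr]
    (T : ℕ) (Z : Fin T → Ω → S × S)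
    (hZmeas : ∀ t, Measurable (Z t))
    (hZindep : iIndepFun Z Pr)
    (hZlaw : ∀ t, Pr.map (Z t) = ξ.compProd P)
    (hT : ⌈-Real.log (δ / 4) * (1 + γ * K) ^ 2 / (2 * ε ^ 2 * (1 - γ) ^ 2)⌉₊ ≤ T) :
    ENNReal.ofReal (1 - δ) ≤
      Pr {ω | ∫ s, |V s - Vb (φ s)| ∂ξ ≤
        (((1 / (T : ℝ)) * ∑ t, |r (Z t ω).1 - rb (φ (Z t ω).1)|) +
          γ * K * ((1 / (T : ℝ)) *
            ∑ t, (1 - ((Pb (φ (Z t ω).1)) (φ (Z t ω).2)).toReal))) / (1 - γ) + ε} := by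
  obtain ⟨hε0, -⟩ := hε
  obtain ⟨hδ0, -⟩ := hδ
  have hγK : 0 ≤ γ * K := mul_nonneg hγ0 hK
  have h1γ : 0 < 1 - γ := sub_pos.2 hγ1
  set loss := sampleLoss r rb Pb φ γ K
  have hloss : Measurable loss := measurable_sampleLoss hrmeas hφ
  have hloss_Icc : ∀ q, loss q ∈ Set.Icc 0 (1 + γ * K) := sampleLoss_mem_Icc hrbdd hrbbdd hγK
  set m := ∫ q, loss q ∂(ξ ⊗ₘ P)
  have hgap : (1 - γ) * ∫ s, |V s - Vb (φ s)| ∂ξ ≤ m :=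
    one_sub_mul_integral_abs_sub_le hinv
      (.of_mem_Icc 0 (1 + γ * K) hloss.aemeasurable (ae_of_all _ hloss_Icc))
      hφ hγ0 hVmeas hVbdd hVbellman hVbbellman hVbLip
  have htail : Pr.real {ω | T * (ε * (1 - γ)) ≤ ∑ t, (m - loss (Z t ω))} ≤ δ / 4 := by
    refine (measureReal_le_sum_integral_sub_le hZmeas hZindep hZlaw hloss hloss_Icc
      (by positivity)).trans (exp_neg_two_mul_sq_div_le_of_ceil_le (by positivity)
        (by positivity) (by linarith) ?_)
    convert hT using 2
    ring
  refine ofReal_one_sub_le_measure_of_compl_subset (htail.trans (by linarith)) fun ω hω => ?_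
  have hm := lt_one_div_mul_sum_add_of_sum_sub_lt (not_le.1 hω)
  rw [Set.mem_ofPred_eq, ← one_div_mul_sum_sampleLoss, ← sub_le_iff_le_add, le_div_iff₀ h1γ]
  linarith

/-- PAC value-difference theorem for discounted return: with probability at least `1-δ` over
`T ≥ ⌈-log(δ/4)·(1+γK)²/(2ε²(1-γ)²)⌉` i.i.d. sample pairs drawn from `ξ ⊗ P`, the expected
value difference between the ground and latent discounted-return values is bounded by
`(L̂_R + γ·K·L̂_P)/(1-γ) + ε`, where `L̂_R` and `L̂_P` are the empirical reward and transition
losses. -/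
theorem pac_value_difference_return
    {S : Type*} [MeasurableSpace S]
    {Sb : Type*} [Fintype Sb] [Nonempty Sb] [MeasurableSpace Sb] [DiscreteMeasurableSpace Sb]
    (P : Kernel S S) [IsMarkovKernel P]
    (Pb : Sb → PMF Sb)
    (φ : S → Sb) (hφ : Measurable φ)
    (ξ : Measure S) [IsProbabilityMeasure ξ]
    (hinv : ∀ A : Set S, MeasurableSet A → ξ A = ∫⁻ s, P s A ∂ξ)
    (γ : ℝ) (hγ0 : 0 ≤ γ) (hγ1 : γ < 1)
    (r : S → ℝ) (hrmeas : Measurable r) (hrbdd : ∀ s, |r s| ≤ 1 / 2)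
    (rb : Sb → ℝ) (hrbbdd : ∀ x, |rb x| ≤ 1 / 2)
    (V : S → ℝ) (hVmeas : Measurable V) (hVbdd : ∃ C, ∀ s, |V s| ≤ C)
    (hVbellman : ∀ s, V s = r s + γ * ∫ s', V s' ∂(P s))
    (Vb : Sb → ℝ)
    (hVbbellman : ∀ x, Vb x = rb x + γ * ∑ y, ((Pb x) y).toReal * Vb y)
    (K : ℝ) (hK : 0 ≤ K) (hVbLip : ∀ x y, |Vb x - Vb y| ≤ K)
    (ε δ : ℝ) (hε : ε ∈ Set.Ioo (0 : ℝ) 1) (hδ : δ ∈ Set.Ioo (0 : ℝ) 1)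
    {Ω : Type*} [MeasurableSpace Ω] (Pr : Measure Ω) [IsProbabilityMeasure Pr]
    (T : ℕ) (Z : Fin T → Ω → S × S)
    (hZmeas : ∀ t, Measurable (Z t))
    (hZindep : iIndepFun Z Pr)
    (hZlaw : ∀ t, Pr.map (Z t) = ξ.compProd P)
    (hT : ⌈-Real.log (δ / 4) * (1 + γ * K) ^ 2 / (2 * ε ^ 2 * (1 - γ) ^ 2)⌉₊ ≤ T) :
    ENNReal.ofReal (1 - δ) ≤
      Pr {ω | ∫ s, |V s - Vb (φ s)| ∂ξ ≤
        (((1 / (T : ℝ)) * ∑ t, |r (Z t ω).1 - rb (φ (Z t ω).1)|) +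
          γ * K * ((1 / (T : ℝ)) *
            ∑ t, (1 - ((Pb (φ (Z t ω).1)) (φ (Z t ω).2)).toReal))) / (1 - γ) + ε} :=
  pac_value_difference_return_general P Pb φ hφ ξ hinv γ hγ0 hγ1 r hrmeas hrbdd rb hrbbdd V hVmeas
    hVbdd hVbellman Vb hVbbellman K hK hVbLip ε δ hε hδ Pr T Z hZmeas hZindep hZlaw hT
end
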